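/- arXiv:2602.18656 — 8 statements merged into one kernel-verified Lean document; each statement's English description precedes it below -/
import Mathlib

section
/- Let X be a random variable taking values in a countable set 𝒳 with probability mass function p₀, let a, b : 𝒳 → ℝ satisfy a(x) ≥ 0, b(x) ≥ 0 and a(x) + b(x) ≤ 1 for all x, and let U be uniformly distributed on [0,1] and independent of X. Define P(x,u) = a(x) + u·b(x). If Pr{P(X,U) ≤ t} = t for every t ∈ [0,1], then for every convex function h : [0,1] → ℝ one has E[h(a(X) + b(X)/2)] ≤ ∫₀¹ h(u) du. -/
/-!
For each `x`, the map `u ↦ h (a x + u * b x)` is convex on `[0,1]`, so the left Hermite–Hadamard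
inequality gives `h (a x + b x / 2) ≤ ∫₀¹ h (a x + u * b x) du`. Averaging over `x` with weights
`p₀ x` turns the right-hand side into `E[h(P(X,U))]`, which is `∫₀¹ h` because `P(X,U)` is
uniform on `[0,1]`.
-/

open MeasureTheory Set Filter Topology

namespace ConvexOn

variable {f : ℝ → ℝ} {a b : ℝ}

lemma two_mul_map_midpoint_le_add (hf : ConvexOn ℝ (Icc a b) f) {t : ℝ} (ht : t ∈ Icc a b) :
    2 * f ((a + b) / 2) ≤ f t + f (a + b - t) := by
  have ht' : a + b - t ∈ Icc a b := ⟨by linarith [ht.2], by linarith [ht.1]⟩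
  have h := hf.2 ht ht' (by norm_num : (0:ℝ) ≤ 1 / 2) (by norm_num : (0:ℝ) ≤ 1 / 2) (by norm_num)
  simp only [smul_eq_mul] at h
  rw [show 1 / 2 * t + 1 / 2 * (a + b - t) = (a + b) / 2 by ring] at h
  linarith

lemma exists_abs_le (hf : ConvexOn ℝ (Icc a b) f) : ∃ C, ∀ t ∈ Icc a b, |f t| ≤ C := by
  refine ⟨|f a| + |f b| + 2 * |f ((a + b) / 2)|, fun t ht => ?_⟩
  have hab : a ≤ b := ht.1.trans ht.2
  have hle_ends : ∀ s ∈ Icc a b, f s ≤ |f a| + |f b| := fun s hs =>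
    (hf.le_max_of_mem_Icc (left_mem_Icc.2 hab) (right_mem_Icc.2 hab) hs).trans <|
      max_le (by linarith [le_abs_self (f a), abs_nonneg (f b)])
        (by linarith [le_abs_self (f b), abs_nonneg (f a)])
  have hmid := hf.two_mul_map_midpoint_le_add ht
  have hrefl := hle_ends (a + b - t) ⟨by linarith [ht.2], by linarith [ht.1]⟩
  rw [abs_le]
  constructor <;> linarith [hle_ends t ht, neg_abs_le (f ((a + b) / 2)),
    abs_nonneg (f ((a + b) / 2))]

lemma intervalIntegrable (hf : ConvexOn ℝ (Icc a b) f) (hab : a ≤ b) :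
    IntervalIntegrable f volume a b := by
  obtain ⟨C, hC⟩ := hf.exists_abs_le
  rw [intervalIntegrable_iff_integrableOn_Ioc_of_le hab, integrableOn_Ioc_iff_integrableOn_Ioo]
  refine Integrable.of_bound ?_ C ?_
  · have hcont := hf.continuousOn_interior
    rw [interior_Icc] at hcont
    exact hcont.aestronglyMeasurable measurableSet_Ioo
  · filter_upwards [ae_restrict_mem measurableSet_Ioo] with t ht
    exact hC t (Ioo_subset_Icc_self ht)

theorem mul_map_midpoint_le_intervalIntegral (hf : ConvexOn ℝ (Icc a b) f) (hab : a ≤ b) :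
    (b - a) * f ((a + b) / 2) ≤ ∫ t in a..b, f t := by
  have hint := hf.intervalIntegrable hab
  have hint_refl : IntervalIntegrable (fun t => f (a + b - t)) volume a b := by
    simpa using (hint.comp_sub_left (a + b)).symm
  have hrefl : ∫ t in a..b, f (a + b - t) = ∫ t in a..b, f t := by
    simp [intervalIntegral.integral_comp_sub_left]
  have h := intervalIntegral.integral_mono_on hab intervalIntegrable_const (hint.add hint_refl)
    fun t ht => hf.two_mul_map_midpoint_le_add ht
  rw [intervalIntegral.integral_const, intervalIntegral.integral_add hint hint_refl, hrefl,
    smul_eq_mul] at h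
  linarith

theorem map_add_half_le_intervalIntegral {s : Set ℝ} (hf : ConvexOn ℝ s f) {x d : ℝ} (hx : x ∈ s)
    (hxd : x + d ∈ s) : f (x + d / 2) ≤ ∫ u in (0:ℝ)..1, f (x + u * d) := by
  have hline : ∀ u, AffineMap.lineMap x (x + d) u = x + u * d := fun u => by
    rw [AffineMap.lineMap_apply_ring']; ring
  have hφ : ConvexOn ℝ (Icc 0 1) fun u => f (x + u * d) := by
    refine ((hf.comp_affineMap (AffineMap.lineMap x (x + d))).subset (fun u hu => ?_)
      (convex_Icc 0 1)).congr fun u _ => by simp [hline]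
    simpa [hline] using hf.1.add_smul_mem hx hxd hu
  simpa [div_eq_inv_mul] using hφ.mul_map_midpoint_le_intervalIntegral zero_le_one

theorem measurable_indicator (hf : ConvexOn ℝ (Icc a b) f) :
    Measurable ((Icc a b).indicator f) := by
  refine ContinuousOn.measurable_of_countable_compl (s := {a, b}ᶜ) (fun t ht => ?_)
    (by simp)
  simp only [mem_compl_iff, mem_insert_iff, mem_singleton_iff, not_or] at ht
  refine ContinuousAt.continuousWithinAt ?_
  by_cases htab : t ∈ Icc a b
  · have htint : Ioo a b ∈ 𝓝 t := Ioo_mem_nhds (lt_of_le_of_ne htab.1 (Ne.symm ht.1))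
      (lt_of_le_of_ne htab.2 ht.2)
    have hcont : ContinuousAt f t :=
      hf.continuousOn_interior.continuousAt (by rwa [interior_Icc])
    exact hcont.congr (mem_of_superset htint fun s hs =>
      (indicator_of_mem (Ioo_subset_Icc_self hs) f).symm)
  · exact continuousAt_const.congr (mem_of_superset (isClosed_Icc.isOpen_compl.mem_nhds htab)
      fun s hs => (indicator_of_notMem hs f).symm)

end ConvexOn

lemma summable_mul_of_abs_le {ι : Type*} {p f : ι → ℝ} {C : ℝ} (hps : Summable p)
    (hp : ∀ i, 0 ≤ p i) (hf : ∀ i, |f i| ≤ C) : Summable fun i => p i * f i :=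
  Summable.of_norm_bounded (hps.mul_right C) fun i => by
    rw [Real.norm_eq_abs, abs_mul, abs_of_nonneg (hp i)]
    exact mul_le_mul_of_nonneg_left (hf i) (hp i)

lemma tsum_mul_le_tsum_mul_of_abs_le {ι : Type*} {p f g : ι → ℝ} {C : ℝ} (hps : Summable p)
    (hp : ∀ i, 0 ≤ p i) (hfg : ∀ i, f i ≤ g i) (hf : ∀ i, |f i| ≤ C) (hg : ∀ i, |g i| ≤ C) :
    ∑' i, p i * f i ≤ ∑' i, p i * g i :=
  Summable.tsum_le_tsum (fun i => mul_le_mul_of_nonneg_left (hfg i) (hp i))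
    (summable_mul_of_abs_le hps hp hf) (summable_mul_of_abs_le hps hp hg)

lemma MeasureTheory.Measure.eq_restrict_Icc_of_Iic {μ : Measure ℝ} (huniv : μ univ ≤ 1)
    (hcdf : ∀ t ∈ Icc (0:ℝ) 1, μ (Iic t) = ENNReal.ofReal t) :
    μ = volume.restrict (Icc 0 1) := by
  have : IsFiniteMeasure μ := ⟨huniv.trans_lt ENNReal.one_lt_top⟩
  refine Measure.ext_of_Iic _ _ fun t => ?_
  have hset : Iic t ∩ Icc 0 1 = Icc 0 (min t 1) := by
    ext u
    simp only [mem_inter_iff, mem_Iic, mem_Icc, le_min_iff]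
    tauto
  rw [Measure.restrict_apply measurableSet_Iic, hset]
  rcases lt_or_ge t 0 with ht0 | ht0
  · have hμ : μ (Iic t) ≤ μ (Iic 0) := measure_mono (Iic_subset_Iic.2 ht0.le)
    rw [hcdf 0 ⟨le_rfl, zero_le_one⟩, ENNReal.ofReal_zero, nonpos_iff_eq_zero] at hμ
    rw [hμ, Icc_eq_empty (by simp [ht0]), measure_empty]
  rcases le_or_gt t 1 with ht1 | ht1
  · rw [hcdf t ⟨ht0, ht1⟩, min_eq_left ht1, Real.volume_Icc, sub_zero]
  · have hμ : μ (Iic 1) ≤ μ (Iic t) := measure_mono (Iic_subset_Iic.2 ht1.le)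
    rw [hcdf 1 ⟨zero_le_one, le_rfl⟩, ENNReal.ofReal_one] at hμ
    rw [le_antisymm ((measure_mono (subset_univ _)).trans huniv) hμ, min_eq_right ht1.le,
      Real.volume_Icc, sub_zero, ENNReal.ofReal_one]

/-- The law of `P(X, U)` when `X` has pmf `p` and `U ~ Uniform[0,1]` is independent of `X`. -/
noncomputable def randomizedLaw {𝒳 : Type*} (p : 𝒳 → ℝ) (P : 𝒳 → ℝ → ℝ) : Measure ℝ :=
  Measure.sum fun x => ENNReal.ofReal (p x) • (volume.restrict (Icc 0 1)).map (P x)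

section randomizedLaw

variable {𝒳 : Type*} {p : 𝒳 → ℝ} {P : 𝒳 → ℝ → ℝ}

lemma randomizedLaw_apply (hp : ∀ x, 0 ≤ p x) (hps : Summable p) (hP : ∀ x, Measurable (P x))
    {s : Set ℝ} (hs : MeasurableSet s) :
    randomizedLaw p P s =
      ENNReal.ofReal (∑' x, p x * (volume (Icc 0 1 ∩ P x ⁻¹' s)).toReal) := by
  have hvol_le : ∀ x, |(volume (Icc (0:ℝ) 1 ∩ P x ⁻¹' s)).toReal| ≤ 1 := fun x => by
    rw [abs_of_nonneg ENNReal.toReal_nonneg]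
    simpa using ENNReal.toReal_mono measure_Icc_lt_top.ne
      (measure_mono (μ := volume) (inter_subset_left (s := Icc (0:ℝ) 1) (t := P x ⁻¹' s)))
  rw [randomizedLaw, Measure.sum_apply _ hs, ENNReal.ofReal_tsum_of_nonneg
    (fun x => mul_nonneg (hp x) ENNReal.toReal_nonneg) (summable_mul_of_abs_le hps hp hvol_le)]
  refine tsum_congr fun x => ?_
  rw [Measure.smul_apply, Measure.map_apply (hP x) hs, Measure.restrict_apply (hP x hs),
    inter_comm, smul_eq_mul, ENNReal.ofReal_mul (hp x),
    ENNReal.ofReal_toReal ((measure_mono inter_subset_left).trans_lt measure_Icc_lt_top).ne]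

lemma randomizedLaw_eq_restrict_Icc (hp : ∀ x, 0 ≤ p x) (hps : Summable p)
    (hp_sum : ∑' x, p x = 1) (hP : ∀ x, Measurable (P x))
    (hcdf : ∀ t ∈ Icc (0:ℝ) 1, ∑' x, p x * (volume (Icc 0 1 ∩ P x ⁻¹' Iic t)).toReal = t) :
    randomizedLaw p P = volume.restrict (Icc 0 1) := by
  refine Measure.eq_restrict_Icc_of_Iic (le_of_eq ?_) fun t ht => ?_
  · simp [randomizedLaw_apply hp hps hP MeasurableSet.univ, hp_sum]
  · rw [randomizedLaw_apply hp hps hP measurableSet_Iic, hcdf t ht]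

lemma integral_randomizedLaw (hp : ∀ x, 0 ≤ p x) (hP : ∀ x, Measurable (P x)) {f : ℝ → ℝ}
    (hf : Measurable f) (hint : Integrable f (randomizedLaw p P)) :
    ∫ y, f y ∂randomizedLaw p P = ∑' x, p x * ∫ u in (0:ℝ)..1, f (P x u) := by
  rw [randomizedLaw, integral_sum_measure hint]
  refine tsum_congr fun x => ?_
  rw [integral_smul_measure, ENNReal.toReal_ofReal (hp x),
    integral_map (hP x).aemeasurable hf.aestronglyMeasurable, smul_eq_mul,
    intervalIntegral.integral_of_le zero_le_one, integral_Icc_eq_integral_Ioc]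

-- Only the values of `f` on `[0,1]` enter, and `f` itself need not be measurable.
lemma tsum_mul_intervalIntegral_eq_of_randomizedLaw_eq (hp : ∀ x, 0 ≤ p x)
    (hP : ∀ x, Measurable (P x)) (hlaw : randomizedLaw p P = volume.restrict (Icc 0 1))
    (hP_mem : ∀ x, MapsTo (P x) (Icc 0 1) (Icc 0 1)) {f : ℝ → ℝ} {C : ℝ}
    (hf : Measurable ((Icc 0 1).indicator f)) (hC : ∀ t ∈ Icc (0:ℝ) 1, |f t| ≤ C) :
    ∑' x, p x * ∫ u in (0:ℝ)..1, f (P x u) = ∫ u in (0:ℝ)..1, f u := by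
  have hint : Integrable ((Icc 0 1).indicator f) (randomizedLaw p P) := by
    rw [hlaw]
    refine Integrable.of_bound hf.aestronglyMeasurable C ?_
    filter_upwards [ae_restrict_mem measurableSet_Icc] with t ht
    simpa [ht] using hC t ht
  have hcomp : ∀ x,
      ∫ u in (0:ℝ)..1, (Icc 0 1).indicator f (P x u) = ∫ u in (0:ℝ)..1, f (P x u) :=
    fun x => intervalIntegral.integral_congr fun u hu =>
      indicator_of_mem (hP_mem x (by rwa [uIcc_of_le zero_le_one] at hu)) f
  simp_rw [← hcomp, ← integral_randomizedLaw hp hP hf hint, hlaw,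
    intervalIntegral.integral_of_le zero_le_one, ← integral_Icc_eq_integral_Ioc]
  exact setIntegral_congr_fun measurableSet_Icc fun t ht => indicator_of_mem ht f

end randomizedLaw

theorem stmt_0_general {𝒳 : Type*}
    (p₀ : 𝒳 → ℝ) (hp₀ : ∀ x, 0 ≤ p₀ x) (hp₀sum : ∑' x, p₀ x = 1)
    (a b : 𝒳 → ℝ) (ha : ∀ x, 0 ≤ a x) (hb : ∀ x, 0 ≤ b x)
    (hab : ∀ x, a x + b x ≤ 1)
    (hunif : ∀ t ∈ Set.Icc (0:ℝ) 1,
      ∑' x, p₀ x * (volume {u : ℝ | u ∈ Set.Icc (0:ℝ) 1 ∧ a x + u * b x ≤ t}).toReal = t)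
    (h : ℝ → ℝ) (hconv : ConvexOn ℝ (Set.Icc (0:ℝ) 1) h) :
    ∑' x, p₀ x * h (a x + b x / 2) ≤ ∫ u in (0:ℝ)..1, h u := by
  set P : 𝒳 → ℝ → ℝ := fun x u => a x + u * b x
  have hP : ∀ x, Measurable (P x) := fun x => by fun_prop
  have hps : Summable p₀ := by
    by_contra hs
    simp [tsum_eq_zero_of_not_summable hs] at hp₀sum
  obtain ⟨C, hC⟩ := hconv.exists_abs_le
  have hends : ∀ x, a x ∈ Icc (0:ℝ) 1 ∧ a x + b x ∈ Icc (0:ℝ) 1 := fun x =>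
    ⟨⟨ha x, by linarith [hb x, hab x]⟩, ⟨by linarith [ha x, hb x], hab x⟩⟩
  have hP_mem : ∀ x, MapsTo (P x) (Icc 0 1) (Icc 0 1) := fun x u hu => by
    simpa [P, mul_comm] using (convex_Icc (0:ℝ) 1).add_smul_mem (hends x).1 (hends x).2 hu
  have hbound : ∀ x, |∫ u in (0:ℝ)..1, h (P x u)| ≤ C := fun x => by
    simpa using intervalIntegral.norm_integral_le_of_norm_le_const (a := 0) (b := 1)
      (f := fun u => h (P x u)) fun u hu =>
        hC _ (hP_mem x (Ioc_subset_Icc_self (by simpa using hu)))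
  calc ∑' x, p₀ x * h (a x + b x / 2)
      ≤ ∑' x, p₀ x * ∫ u in (0:ℝ)..1, h (P x u) :=
        tsum_mul_le_tsum_mul_of_abs_le hps hp₀
          (fun x => hconv.map_add_half_le_intervalIntegral (hends x).1 (hends x).2)
          (fun x => hC _ ⟨by linarith [ha x, hb x], by linarith [hab x, hb x]⟩) hbound
    _ = ∫ u in (0:ℝ)..1, h u :=
        tsum_mul_intervalIntegral_eq_of_randomizedLaw_eq hp₀ hP
          (randomizedLaw_eq_restrict_Icc hp₀ hps hp₀sum hP hunif) hP_mem
          hconv.measurable_indicator hC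

/-- If the randomized p-value `P(x,u) = a(x) + u·b(x)` is uniformly
distributed on `[0,1]` under the null (with `U ~ Uniform[0,1]` independent of `X`),
then the corresponding mid-p-value `a(X) + b(X)/2` is sub-uniform under the null:
`E₀[h(a(X) + b(X)/2)] ≤ ∫₀¹ h(u) du` for every convex `h : [0,1] → ℝ`. -/
theorem stmt_0 {𝒳 : Type*} [Countable 𝒳]
    (p₀ : 𝒳 → ℝ) (hp₀ : ∀ x, 0 ≤ p₀ x) (hp₀sum : ∑' x, p₀ x = 1)
    (a b : 𝒳 → ℝ) (ha : ∀ x, 0 ≤ a x) (hb : ∀ x, 0 ≤ b x)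
    (hab : ∀ x, a x + b x ≤ 1)
    (hunif : ∀ t ∈ Set.Icc (0:ℝ) 1,
      ∑' x, p₀ x * (volume {u : ℝ | u ∈ Set.Icc (0:ℝ) 1 ∧ a x + u * b x ≤ t}).toReal = t)
    (h : ℝ → ℝ) (hconv : ConvexOn ℝ (Set.Icc (0:ℝ) 1) h) :
    ∑' x, p₀ x * h (a x + b x / 2) ≤ ∫ u in (0:ℝ)..1, h u :=
  stmt_0_general p₀ hp₀ hp₀sum a b ha hb hab hunif h hconv
end

section
/- For every convex function h : [0,1] → ℝ, Σ_{x∈𝒳} p₀(x)·h(Q^T(x)) ≤ ∫₀¹ h(u) du; that is, the mid-p-value based on T is sub-uniform under the null distribution. -/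
/-!
Group the points of `𝒳` by the value `t` of `T`. With `F t = Pr₀{T > t}` and `G t = Pr₀{T = t}`,
every point of the level set `{T = t}` has mid-p-value the midpoint of `I t = (F t, F t + G t]`.
For `s < t` we have `F t + G t ≤ F s`, so these intervals are pairwise disjoint; they lie in
`(0, 1]` and their lengths `G t` add up to `1`, so they tile `(0, 1]` up to a null set. Summing the
Hermite–Hadamard inequality `G t * h (midpoint of I t) ≤ ∫_{I t} h` over `t` gives the claim.
-/

open MeasureTheory Set Function

namespace ConvexOn

variable {h : ℝ → ℝ} {a b : ℝ}

theorem two_mul_apply_midpoint_le (hconv : ConvexOn ℝ (Icc a b) h) {u : ℝ} (hu : u ∈ Icc a b) :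
    2 * h ((a + b) / 2) ≤ h u + h (a + b - u) := by
  have hu' : a + b - u ∈ Icc a b := ⟨by linarith [hu.2], by linarith [hu.1]⟩
  have key := hconv.2 hu hu' (by norm_num : (0 : ℝ) ≤ 1 / 2) (by norm_num : (0 : ℝ) ≤ 1 / 2)
    (by norm_num)
  simp only [smul_eq_mul] at key
  rw [show 1 / 2 * u + 1 / 2 * (a + b - u) = (a + b) / 2 by ring] at key
  linarith

theorem exists_abs_le_of_Icc (hconv : ConvexOn ℝ (Icc a b) h) :
    ∃ C, ∀ u ∈ Icc a b, |h u| ≤ C := by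
  set M := max (h a) (h b)
  refine ⟨max M (M - 2 * h ((a + b) / 2)), fun u hu => abs_le.2 ⟨?_, ?_⟩⟩
  all_goals
    have hab : a ≤ b := hu.1.trans hu.2
    have hmax : ∀ v ∈ Icc a b, h v ≤ M :=
      fun v hv => hconv.le_max_of_mem_Icc (left_mem_Icc.2 hab) (right_mem_Icc.2 hab) hv
  · have hu' : a + b - u ∈ Icc a b := ⟨by linarith [hu.2], by linarith [hu.1]⟩
    linarith [hconv.two_mul_apply_midpoint_le hu, hmax _ hu',
      le_max_right M (M - 2 * h ((a + b) / 2))]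
  · exact (hmax u hu).trans (le_max_left _ _)

theorem integrableOn_Icc (hconv : ConvexOn ℝ (Icc a b) h) : IntegrableOn h (Icc a b) := by
  obtain ⟨C, hC⟩ := hconv.exists_abs_le_of_Icc
  have hcont : ContinuousOn h (Ioo a b) := by
    simpa only [interior_Icc] using hconv.continuousOn_interior
  rw [integrableOn_Icc_iff_integrableOn_Ioo]
  exact .of_bound measure_Ioo_lt_top (hcont.aestronglyMeasurable measurableSet_Ioo) C
    (ae_restrict_of_forall_mem measurableSet_Ioo fun u hu => hC u (Ioo_subset_Icc_self hu))

/-- Hermite–Hadamard; `h` and its reflection `u ↦ h (a + b - u)` have the same integral. -/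
theorem mul_apply_midpoint_le_integral (hconv : ConvexOn ℝ (Icc a b) h) (hab : a ≤ b) :
    (b - a) * h ((a + b) / 2) ≤ ∫ u in a..b, h u := by
  have hi : IntervalIntegrable h volume a b :=
    (intervalIntegrable_iff_integrableOn_Icc_of_le hab).2 hconv.integrableOn_Icc
  have hi' : IntervalIntegrable (fun u => h (a + b - u)) volume a b := by
    simpa using (hi.comp_sub_left (a + b)).symm
  have hreflect : ∫ u in a..b, h (a + b - u) = ∫ u in a..b, h u := by
    simp [intervalIntegral.integral_comp_sub_left]
  have hmono := intervalIntegral.integral_mono_on hab intervalIntegrable_const (hi.add hi')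
    fun u hu => hconv.two_mul_apply_midpoint_le hu
  rw [intervalIntegral.integral_const, intervalIntegral.integral_add hi hi', hreflect,
    smul_eq_mul] at hmono
  linarith

/-- The intervals `(a i, b i]` tile `(c, d]` up to a null set, because their total length is
`d - c`. -/
theorem tsum_mul_apply_midpoint_le_integral {ι : Type*} [Countable ι] {c d : ℝ}
    (hconv : ConvexOn ℝ (Icc c d) h) {a b : ι → ℝ} (hca : ∀ i, c ≤ a i) (hab : ∀ i, a i ≤ b i)
    (hbd : ∀ i, b i ≤ d) (hdisj : Pairwise (Disjoint on fun i => Ioc (a i) (b i)))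
    (hlen : HasSum (fun i => b i - a i) (d - c)) :
    ∑' i, (b i - a i) * h ((a i + b i) / 2) ≤ ∫ u in c..d, h u := by
  have hcd : c ≤ d := sub_nonneg.1 (hlen.nonneg fun i => sub_nonneg.2 (hab i))
  have hsub : ⋃ i, Ioc (a i) (b i) ⊆ Ioc c d :=
    iUnion_subset fun i => Ioc_subset_Ioc (hca i) (hbd i)
  have hvol : volume (Ioc c d) ≤ volume (⋃ i, Ioc (a i) (b i)) := by
    simp only [measure_iUnion hdisj fun i => measurableSet_Ioc, Real.volume_Ioc]
    rw [← ENNReal.ofReal_tsum_of_nonneg (fun i => sub_nonneg.2 (hab i)) hlen.summable,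
      hlen.tsum_eq]
  have hcover : ⋃ i, Ioc (a i) (b i) =ᵐ[volume] Ioc c d :=
    ae_eq_of_subset_of_measure_ge hsub hvol
      (MeasurableSet.iUnion fun i => measurableSet_Ioc).nullMeasurableSet measure_Ioc_lt_top.ne
  have hpieces : HasSum (fun i => ∫ u in Ioc (a i) (b i), h u) (∫ u in Ioc c d, h u) := by
    rw [← setIntegral_congr_set hcover]
    exact hasSum_integral_iUnion (fun i => measurableSet_Ioc) hdisj
      (hconv.integrableOn_Icc.mono_set (hsub.trans Ioc_subset_Icc_self))
  have hpiece (i : ι) : (b i - a i) * h ((a i + b i) / 2) ≤ ∫ u in Ioc (a i) (b i), h u := by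
    rw [← intervalIntegral.integral_of_le (hab i)]
    exact mul_apply_midpoint_le_integral
      (hconv.subset (Icc_subset_Icc (hca i) (hbd i)) (convex_Icc _ _)) (hab i)
  obtain ⟨C, hC⟩ := hconv.exists_abs_le_of_Icc
  have hsummable : Summable fun i => (b i - a i) * h ((a i + b i) / 2) := by
    refine (hlen.summable.mul_right C).of_norm_bounded fun i => ?_
    rw [Real.norm_eq_abs, abs_mul, abs_of_nonneg (sub_nonneg.2 (hab i))]
    refine mul_le_mul_of_nonneg_left (hC _ ⟨?_, ?_⟩) (sub_nonneg.2 (hab i)) <;>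
      linarith [hca i, hab i, hbd i]
  rw [intervalIntegral.integral_of_le hcd, ← hpieces.tsum_eq]
  exact hsummable.tsum_le_tsum hpiece hpieces.summable

end ConvexOn

section IteSums

variable {𝒳 : Type*} {p : 𝒳 → ℝ} {P R S : 𝒳 → Prop} [DecidablePred P] [DecidablePred R]
  [DecidablePred S]

theorem summable_ite_of_nonneg (hp : ∀ x, 0 ≤ p x) (hps : Summable p) :
    Summable fun x => if P x then p x else 0 :=
  hps.of_nonneg_of_le (fun x => by split_ifs <;> simp [hp x]) fun x => by
    split_ifs <;> simp [hp x]

theorem tsum_ite_add_tsum_ite_le (hp : ∀ x, 0 ≤ p x) (hps : Summable p)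
    (hPR : ∀ x, P x → ¬R x) (hS : ∀ x, P x ∨ R x → S x) :
    ∑' x, (if P x then p x else 0) + ∑' x, (if R x then p x else 0)
      ≤ ∑' x, if S x then p x else 0 := by
  rw [← (summable_ite_of_nonneg hp hps).tsum_add (summable_ite_of_nonneg hp hps)]
  refine ((summable_ite_of_nonneg hp hps).add (summable_ite_of_nonneg hp hps)).tsum_le_tsum
    (fun x => ?_) (summable_ite_of_nonneg hp hps)
  by_cases hP : P x
  · simp [hP, hPR x hP, hS x (.inl hP)]
  by_cases hR : R x
  · simp [hP, hR, hS x (.inr hR)]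
  · simp only [hP, hR, if_false, add_zero]
    split_ifs <;> simp [hp x]

end IteSums

section MidPValue

variable {𝒳 : Type*} (p T : 𝒳 → ℝ)

noncomputable def upperTailMass (t : ℝ) : ℝ := ∑' y, if t < T y then p y else 0

noncomputable def levelMass (t : ℝ) : ℝ := ∑' y, if T y = t then p y else 0

noncomputable def midPValue (t : ℝ) : ℝ := upperTailMass p T t + 1 / 2 * levelMass p T t

variable {p T}

theorem upperTailMass_nonneg (hp : ∀ x, 0 ≤ p x) (t : ℝ) : 0 ≤ upperTailMass p T t :=
  tsum_nonneg fun y => by split_ifs <;> simp [hp y]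

theorem levelMass_nonneg (hp : ∀ x, 0 ≤ p x) (t : ℝ) : 0 ≤ levelMass p T t :=
  tsum_nonneg fun y => by split_ifs <;> simp [hp y]

theorem upperTailMass_add_levelMass_le_tsum (hp : ∀ x, 0 ≤ p x) (hps : Summable p) (t : ℝ) :
    upperTailMass p T t + levelMass p T t ≤ ∑' x, p x := by
  simpa only [upperTailMass, levelMass, if_true] using
    tsum_ite_add_tsum_ite_le (S := fun _ => True) hp hps (fun _ hy hy' => hy.ne' hy')
      fun _ _ => trivial

theorem upperTailMass_add_levelMass_le_of_lt (hp : ∀ x, 0 ≤ p x) (hps : Summable p) {s t : ℝ}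
    (hst : s < t) : upperTailMass p T t + levelMass p T t ≤ upperTailMass p T s :=
  tsum_ite_add_tsum_ite_le hp hps (fun _ hy hy' => hy.ne' hy')
    fun _ hy => hy.elim hst.trans fun hy => hy ▸ hst

theorem pairwise_disjoint_Ioc_upperTailMass (hp : ∀ x, 0 ≤ p x) (hps : Summable p) :
    Pairwise (Disjoint on fun b : range T =>
      Ioc (upperTailMass p T b) (upperTailMass p T b + levelMass p T b)) :=
  (pairwise_disjoint_on _).2 fun _ _ hbb' =>
    (Ioc_disjoint_Ioc_of_le (upperTailMass_add_levelMass_le_of_lt hp hps hbb')).symm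

theorem tsum_fiber_eq_levelMass (b : range T) :
    ∑' x : rangeFactorization T ⁻¹' {b}, p x = levelMass p T b := by
  rw [tsum_subtype]
  refine tsum_congr fun x => ?_
  have hmem : x ∈ rangeFactorization T ⁻¹' {b} ↔ T x = b := Subtype.ext_iff
  by_cases hx : T x = b <;> simp [hmem, hx]

theorem hasSum_levelMass_mul {f : ℝ → ℝ} (hf : Summable fun x => p x * f (T x)) :
    HasSum (fun b : range T => levelMass p T b * f b) (∑' x, p x * f (T x)) := by
  have hfiber (b : range T) (x : rangeFactorization T ⁻¹' {b}) : T x = b :=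
    congrArg Subtype.val x.2
  simpa only [hfiber, tsum_mul_right, tsum_fiber_eq_levelMass] using
    hf.hasSum.tsum_fiberwise (rangeFactorization T)

theorem hasSum_levelMass (hps : Summable p) :
    HasSum (fun b : range T => levelMass p T b) (∑' x, p x) := by
  simpa only [mul_one] using hasSum_levelMass_mul (f := fun _ => 1) (by simpa only [mul_one])

theorem midPValue_mem_Icc (hp : ∀ x, 0 ≤ p x) (hps : Summable p) (hp1 : ∑' x, p x = 1)
    (t : ℝ) : midPValue p T t ∈ Icc 0 1 := by
  have hF := upperTailMass_nonneg (T := T) hp t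
  have hG := levelMass_nonneg (T := T) hp t
  have hFG := upperTailMass_add_levelMass_le_tsum (T := T) hp hps t
  constructor <;> unfold midPValue <;> linarith

/-- `midPValue p T b` is the midpoint of the interval `(F b, F b + G b]` of length `G b`, and these
intervals tile `(0, 1]`. -/
theorem tsum_levelMass_mul_midPValue_le_integral [Countable 𝒳] (hp : ∀ x, 0 ≤ p x)
    (hps : Summable p) (hp1 : ∑' x, p x = 1) {h : ℝ → ℝ} (hconv : ConvexOn ℝ (Icc 0 1) h) :
    ∑' b : range T, levelMass p T b * h (midPValue p T b) ≤ ∫ u in (0 : ℝ)..1, h u := by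
  have : Countable (range T) := (countable_range T).to_subtype
  have hmid (t : ℝ) : midPValue p T t
      = (upperTailMass p T t + (upperTailMass p T t + levelMass p T t)) / 2 := by
    unfold midPValue
    ring
  have hlen := hasSum_levelMass (T := T) hps
  rw [hp1] at hlen
  simpa only [add_sub_cancel_left, ← hmid] using
    hconv.tsum_mul_apply_midpoint_le_integral (a := fun b : range T => upperTailMass p T b)
      (b := fun b => upperTailMass p T b + levelMass p T b) (fun b => upperTailMass_nonneg hp b)
      (fun b => le_add_of_nonneg_right (levelMass_nonneg hp b))
      (fun b => hp1 ▸ upperTailMass_add_levelMass_le_tsum hp hps b)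
      (pairwise_disjoint_Ioc_upperTailMass hp hps)
      (by simpa only [add_sub_cancel_left, sub_zero] using hlen)

end MidPValue

/-- The mid-p-value based on a test statistic `T`,
`Q^T(x) = Pr₀{T(X) > T(x)} + (1/2)·Pr₀{T(X) = T(x)}`, is sub-uniform under the null:
`E₀[h(Q^T(X))] = Σ_x p₀(x)·h(Q^T(x)) ≤ ∫₀¹ h(u) du` for every convex `h : [0,1] → ℝ`. -/
theorem stmt_1 {𝒳 : Type*} [Countable 𝒳]
    (p₀ : 𝒳 → ℝ) (hp₀ : ∀ x, 0 ≤ p₀ x) (hp₀sum : ∑' x, p₀ x = 1)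
    (T : 𝒳 → ℝ)
    (Q : 𝒳 → ℝ)
    (hQ : ∀ x, Q x = (∑' y, if T x < T y then p₀ y else 0)
      + (1/2) * ∑' y, if T y = T x then p₀ y else 0)
    (h : ℝ → ℝ) (hconv : ConvexOn ℝ (Set.Icc (0:ℝ) 1) h) :
    ∑' x, p₀ x * h (Q x) ≤ ∫ u in (0:ℝ)..1, h u := by
  have hps : Summable p₀ := by
    by_contra hns
    simp [tsum_eq_zero_of_not_summable hns] at hp₀sum
  have hQmid (x : 𝒳) : Q x = midPValue p₀ T (T x) := hQ x
  obtain ⟨C, hC⟩ := hconv.exists_abs_le_of_Icc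
  have hsummable : Summable fun x => p₀ x * h (midPValue p₀ T (T x)) := by
    refine (hps.mul_right C).of_norm_bounded fun x => ?_
    rw [norm_mul, Real.norm_eq_abs, Real.norm_eq_abs, abs_of_nonneg (hp₀ x)]
    exact mul_le_mul_of_nonneg_left (hC _ (midPValue_mem_Icc hp₀ hps hp₀sum _)) (hp₀ x)
  simp only [hQmid]
  rw [← (hasSum_levelMass_mul (T := T) (f := fun t => h (midPValue p₀ T t)) hsummable).tsum_eq]
  exact tsum_levelMass_mul_midPValue_le_integral hp₀ hps hp₀sum hconv
end

section
/- Let α ∈ [0,1], let φ be a size-α test based on T and let ψ be a minimally discrete size-α test based on R, where R is injective and agrees with T, and assume p₀(x) > 0 for every x ∈ 𝒳. Then the rejection region of φ is contained in that of ψ: for every x ∈ 𝒳, φ(x) = 1 implies ψ(x) = 1. -/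
/-!
If `φ x = 1` but `ψ x < 1`, then `ψ ≤ φ` everywhere: wherever `ψ y > 0` the rank of `y` is at
most that of `x`, so `T y ≥ T x` because `R` agrees with `T`, and a threshold test that rejects
fully at `x` also rejects fully at every point with a larger statistic. Weighting by the positive
`p₀`, the size of `ψ` is then strictly smaller than the size of `φ`, although both equal `α`.
-/

section TestComparison

variable {𝒳 : Type*}

theorem threshold_test_eq_one_of_le {T φ : 𝒳 → ℝ} {k γ : ℝ}
    (hφ1 : ∀ x, T x > k → φ x = 1) (hφ2 : ∀ x, T x = k → φ x = γ)
    (hφ3 : ∀ x, T x < k → φ x = 0) {x y : 𝒳} (hx : φ x = 1) (hxy : T x ≤ T y) :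
    φ y = 1 := by
  rcases lt_trichotomy (T x) k with hlt | heq | hgt
  · simp [hφ3 x hlt] at hx
  · rcases hxy.lt_or_eq with hlt' | heq'
    · exact hφ1 y (heq ▸ hlt')
    · rw [hφ2 y (heq' ▸ heq), ← hx, hφ2 x heq]
  · exact hφ1 y (hgt.trans_le hxy)

theorem rank_test_rank_le_of_pos {R : 𝒳 → ℕ} {ψ : 𝒳 → ℝ} {kstar : ℕ}
    (hψ1 : ∀ x, R x < kstar → ψ x = 1) (hψ3 : ∀ x, R x > kstar → ψ x = 0)
    {x y : 𝒳} (hx : ψ x ≠ 1) (hy : 0 < ψ y) : R y ≤ R x := by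
  have hRy : R y ≤ kstar := not_lt.1 fun h => hy.ne' (hψ3 y h)
  have hRx : kstar ≤ R x := not_lt.1 fun h => hx (hψ1 x h)
  exact hRy.trans hRx

theorem tsum_mul_lt_tsum_mul {p ψ φ : 𝒳 → ℝ} (hp : Summable p) (hp_pos : ∀ x, 0 < p x)
    (hψ0 : ∀ x, 0 ≤ ψ x) (hψφ : ∀ x, ψ x ≤ φ x) (hφ1 : ∀ x, φ x ≤ 1) {x : 𝒳}
    (hx : ψ x < φ x) : ∑' y, ψ y * p y < ∑' y, φ y * p y := by
  have hle : ∀ y, ψ y * p y ≤ φ y * p y :=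
    fun y => mul_le_mul_of_nonneg_right (hψφ y) (hp_pos y).le
  have hφ : Summable fun y => φ y * p y :=
    hp.of_nonneg_of_le (fun y => (mul_nonneg (hψ0 y) (hp_pos y).le).trans (hle y))
      fun y => mul_le_of_le_one_left (hp_pos y).le (hφ1 y)
  have hψ : Summable fun y => ψ y * p y :=
    hφ.of_nonneg_of_le (fun y => mul_nonneg (hψ0 y) (hp_pos y).le) hle
  exact hψ.tsum_lt_tsum hle (mul_lt_mul_of_pos_right hx (hp_pos x)) hφ

end TestComparison

theorem stmt_3_general {𝒳 : Type*}
    (p₀ : 𝒳 → ℝ) (hp₀pos : ∀ x, 0 < p₀ x) (hp₀sum : ∑' x, p₀ x = 1)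
    (T : 𝒳 → ℝ) (R : 𝒳 → ℕ)
    (hagree : ∀ x y, T x > T y → R x < R y)
    (α : ℝ)
    (φ : 𝒳 → ℝ) (hφ01 : ∀ x, φ x ∈ Set.Icc (0:ℝ) 1)
    (k : ℝ) (γ : ℝ)
    (hφ1 : ∀ x, T x > k → φ x = 1) (hφ2 : ∀ x, T x = k → φ x = γ)
    (hφ3 : ∀ x, T x < k → φ x = 0) (hφα : ∑' x, φ x * p₀ x = α)
    (ψ : 𝒳 → ℝ) (hψ01 : ∀ x, ψ x ∈ Set.Icc (0:ℝ) 1)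
    (kstar : ℕ)
    (hψ1 : ∀ x, R x < kstar → ψ x = 1)
    (hψ3 : ∀ x, R x > kstar → ψ x = 0) (hψα : ∑' x, ψ x * p₀ x = α) :
    ∀ x, φ x = 1 → ψ x = 1 := by
  intro x hx
  by_contra hψx
  have hψle : ∀ y, ψ y ≤ φ y := fun y => by
    by_contra! hlt
    have hRy := rank_test_rank_le_of_pos hψ1 hψ3 hψx ((hφ01 y).1.trans_lt hlt)
    have hT : T x ≤ T y := not_lt.1 fun h => (hagree x y h).not_ge hRy
    rw [threshold_test_eq_one_of_le hφ1 hφ2 hφ3 hx hT] at hlt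
    exact hlt.not_ge (hψ01 y).2
  have hp₀ : Summable p₀ := by
    by_contra h
    simp [tsum_eq_zero_of_not_summable h] at hp₀sum
  have hsize := tsum_mul_lt_tsum_mul hp₀ hp₀pos (fun y => (hψ01 y).1) hψle (fun y => (hφ01 y).2)
    ((lt_of_le_of_ne (hψ01 x).2 hψx).trans_eq hx.symm)
  linarith

/-- If `φ` is a size-α test based on `T` and `ψ` is a minimally
discrete size-α test based on `R`, where `R` is injective and agrees with `T`,
and `p₀(x) > 0` for all `x`, then the rejection region of `φ` is contained in
that of `ψ`: `φ(x) = 1` implies `ψ(x) = 1`. -/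
theorem stmt_3 {𝒳 : Type*} [Countable 𝒳]
    (p₀ : 𝒳 → ℝ) (hp₀pos : ∀ x, 0 < p₀ x) (hp₀sum : ∑' x, p₀ x = 1)
    (T : 𝒳 → ℝ) (R : 𝒳 → ℕ) (hRinj : Function.Injective R)
    (hagree : ∀ x y, T x > T y → R x < R y)
    (α : ℝ) (hα : α ∈ Set.Icc (0:ℝ) 1)
    (φ : 𝒳 → ℝ) (hφ01 : ∀ x, φ x ∈ Set.Icc (0:ℝ) 1)
    (k : ℝ) (γ : ℝ) (hγ : γ ∈ Set.Icc (0:ℝ) 1)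
    (hφ1 : ∀ x, T x > k → φ x = 1) (hφ2 : ∀ x, T x = k → φ x = γ)
    (hφ3 : ∀ x, T x < k → φ x = 0) (hφα : ∑' x, φ x * p₀ x = α)
    (ψ : 𝒳 → ℝ) (hψ01 : ∀ x, ψ x ∈ Set.Icc (0:ℝ) 1)
    (kstar : ℕ) (γstar : ℝ) (hγstar : γstar ∈ Set.Icc (0:ℝ) 1)
    (hψ1 : ∀ x, R x < kstar → ψ x = 1) (hψ2 : ∀ x, R x = kstar → ψ x = γstar)
    (hψ3 : ∀ x, R x > kstar → ψ x = 0) (hψα : ∑' x, ψ x * p₀ x = α) :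
    ∀ x, φ x = 1 → ψ x = 1 :=
  stmt_3_general p₀ hp₀pos hp₀sum T R hagree α φ hφ01 k γ hφ1 hφ2 hφ3 hφα ψ hψ01 kstar hψ1 hψ3 hψα
end

section
/- Let α ∈ [0,1], let φ be a size-α test based on T and let ψ be a minimally discrete size-α test based on R, where R is injective and agrees with T, and assume p₀(x) > 0 for every x ∈ 𝒳. Then for every θ ∈ Θ, the non-randomized MD decision rule is at least as powerful as the non-randomized rule based on T: Pr_θ{ψ(X) = 1} ≥ Pr_θ{φ(X) = 1}. -/
/-!
If `φ x = 1` but `ψ x ≠ 1`, then `R x ≥ k*`, so every `y` that `ψ` rejects with positive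
probability has `T y ≥ T x` (because `R` agrees with `T`) and is therefore rejected by `φ` for
sure. Hence `ψ ≤ φ` pointwise with strict inequality at `x`; as `p₀ > 0` this makes the size of
`ψ` strictly smaller than that of `φ`, contradicting that both have size `α`. So
`{φ = 1} ⊆ {ψ = 1}`, and the powers of the non-randomized rules compare accordingly.
-/

section Summation

variable {ι : Type*}

lemma summable_of_tsum_eq_one {f : ι → ℝ} (h : ∑' i, f i = 1) : Summable f := by
  by_contra hf
  simp [tsum_eq_zero_of_not_summable hf] at h

lemma summable_mul_of_mem_Icc {f p : ι → ℝ} (hf : ∀ i, f i ∈ Set.Icc (0 : ℝ) 1)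
    (hp : ∀ i, 0 ≤ p i) (hps : Summable p) : Summable fun i => f i * p i :=
  hps.of_nonneg_of_le (fun i => mul_nonneg (hf i).1 (hp i))
    fun i => mul_le_of_le_one_left (hp i) (hf i).2

lemma eq_of_le_of_tsum_mul_eq {f g p : ι → ℝ} (hf : Summable fun i => f i * p i)
    (hg : Summable fun i => g i * p i) (hp : ∀ i, 0 < p i) (hle : ∀ i, f i ≤ g i)
    (heq : ∑' i, f i * p i = ∑' i, g i * p i) (i : ι) : f i = g i := by
  by_contra hne
  have hlt : f i * p i < g i * p i := mul_lt_mul_of_pos_right (lt_of_le_of_ne (hle i) hne) (hp i)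
  exact (hf.tsum_lt_tsum (fun j => mul_le_mul_of_nonneg_right (hle j) (hp j).le) hlt hg).ne heq

lemma tsum_ite_le_tsum_ite {P Q : ι → Prop} [DecidablePred P] [DecidablePred Q]
    (hPQ : ∀ i, P i → Q i) {f : ι → ℝ} (hf : ∀ i, 0 ≤ f i) (hfs : Summable f) :
    (∑' i, if P i then f i else 0) ≤ ∑' i, if Q i then f i else 0 := by
  have hite : ∀ (S : ι → Prop) [DecidablePred S], Summable fun i => if S i then f i else 0 :=
    fun S _ => hfs.of_nonneg_of_le (fun i => by split_ifs <;> simp [hf i])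
      fun i => by split_ifs <;> simp [hf i]
  refine (hite P).tsum_le_tsum (fun i => ?_) (hite Q)
  by_cases hP : P i
  · simp [hP, hPQ i hP]
  · split_ifs <;> simp [hf i]

end Summation

section Tests

variable {𝒳 : Type*} {T φ ψ : 𝒳 → ℝ} {k γ : ℝ} {R : 𝒳 → ℕ} {kstar : ℕ}

lemma eq_one_of_eq_one_of_le (hφ1 : ∀ x, T x > k → φ x = 1) (hφ2 : ∀ x, T x = k → φ x = γ)
    (hφ3 : ∀ x, T x < k → φ x = 0) {x y : 𝒳} (hx : φ x = 1) (hxy : T x ≤ T y) : φ y = 1 := by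
  rcases lt_trichotomy (T x) k with hlt | heq | hgt
  · simp [hφ3 x hlt] at hx
  · have hγ : γ = 1 := (hφ2 x heq).symm.trans hx
    rcases (heq ▸ hxy).lt_or_eq with hy | hy
    · exact hφ1 y hy
    · rw [hφ2 y hy.symm, hγ]
  · exact hφ1 y (hgt.trans_le hxy)

lemma le_of_eq_one_of_ne_one (hagree : ∀ x y, T x > T y → R x < R y)
    (hφ01 : ∀ x, φ x ∈ Set.Icc (0 : ℝ) 1) (hφ1 : ∀ x, T x > k → φ x = 1)
    (hφ2 : ∀ x, T x = k → φ x = γ) (hφ3 : ∀ x, T x < k → φ x = 0)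
    (hψ01 : ∀ x, ψ x ∈ Set.Icc (0 : ℝ) 1) (hψ1 : ∀ x, R x < kstar → ψ x = 1)
    (hψ3 : ∀ x, R x > kstar → ψ x = 0) {x : 𝒳} (hφx : φ x = 1) (hψx : ψ x ≠ 1) (y : 𝒳) :
    ψ y ≤ φ y := by
  have hRx : kstar ≤ R x := not_lt.mp fun h => hψx (hψ1 x h)
  rcases le_or_gt (R y) kstar with hRy | hRy
  · have hTxy : T x ≤ T y := not_lt.mp fun h => (hagree x y h).not_ge (hRy.trans hRx)
    rw [eq_one_of_eq_one_of_le hφ1 hφ2 hφ3 hφx hTxy]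
    exact (hψ01 y).2
  · rw [hψ3 y hRy]
    exact (hφ01 y).1

end Tests

theorem stmt_4_general {𝒳 : Type*} {Θ : Type*}
    (p : Θ → 𝒳 → ℝ) (hp : ∀ θ x, 0 ≤ p θ x) (hpsum : ∀ θ, ∑' x, p θ x = 1)
    (θ₀ : Θ) (p₀ : 𝒳 → ℝ) (hnull : p θ₀ = p₀)
    (hp₀pos : ∀ x, 0 < p₀ x)
    (T : 𝒳 → ℝ) (R : 𝒳 → ℕ)
    (hagree : ∀ x y, T x > T y → R x < R y)
    (α : ℝ)
    (φ : 𝒳 → ℝ) (hφ01 : ∀ x, φ x ∈ Set.Icc (0:ℝ) 1)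
    (k : ℝ) (γ : ℝ)
    (hφ1 : ∀ x, T x > k → φ x = 1) (hφ2 : ∀ x, T x = k → φ x = γ)
    (hφ3 : ∀ x, T x < k → φ x = 0) (hφα : ∑' x, φ x * p₀ x = α)
    (ψ : 𝒳 → ℝ) (hψ01 : ∀ x, ψ x ∈ Set.Icc (0:ℝ) 1)
    (kstar : ℕ)
    (hψ1 : ∀ x, R x < kstar → ψ x = 1)
    (hψ3 : ∀ x, R x > kstar → ψ x = 0) (hψα : ∑' x, ψ x * p₀ x = α) :
    ∀ θ : Θ, (∑' x, if φ x = 1 then p θ x else 0) ≤ ∑' x, if ψ x = 1 then p θ x else 0 := by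
  intro θ
  have hp₀ : Summable p₀ := hnull ▸ summable_of_tsum_eq_one (hpsum θ₀)
  have hsub : ∀ x, φ x = 1 → ψ x = 1 := fun x hφx => by
    by_contra hψx
    have hψφ := eq_of_le_of_tsum_mul_eq (summable_mul_of_mem_Icc hψ01 (fun x => (hp₀pos x).le) hp₀)
      (summable_mul_of_mem_Icc hφ01 (fun x => (hp₀pos x).le) hp₀) hp₀pos
      (le_of_eq_one_of_ne_one hagree hφ01 hφ1 hφ2 hφ3 hψ01 hψ1 hψ3 hφx hψx) (hψα.trans hφα.symm) x
    exact hψx (hψφ.trans hφx)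
  exact tsum_ite_le_tsum_ite hsub (hp θ) (summable_of_tsum_eq_one (hpsum θ))

/-- If `φ` is a size-α test based on `T` and `ψ` is a minimally
discrete size-α test based on `R` (injective, agreeing with `T`), with
`p₀(x) > 0` for all `x`, then for every `θ ∈ Θ` the non-randomized MD decision
rule is at least as powerful: `Pr_θ{ψ(X) = 1} ≥ Pr_θ{φ(X) = 1}`. -/
theorem stmt_4 {𝒳 : Type*} [Countable 𝒳] {Θ : Type*}
    (p : Θ → 𝒳 → ℝ) (hp : ∀ θ x, 0 ≤ p θ x) (hpsum : ∀ θ, ∑' x, p θ x = 1)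
    (θ₀ : Θ) (p₀ : 𝒳 → ℝ) (hnull : p θ₀ = p₀)
    (hp₀pos : ∀ x, 0 < p₀ x)
    (T : 𝒳 → ℝ) (R : 𝒳 → ℕ) (hRinj : Function.Injective R)
    (hagree : ∀ x y, T x > T y → R x < R y)
    (α : ℝ) (hα : α ∈ Set.Icc (0:ℝ) 1)
    (φ : 𝒳 → ℝ) (hφ01 : ∀ x, φ x ∈ Set.Icc (0:ℝ) 1)
    (k : ℝ) (γ : ℝ) (hγ : γ ∈ Set.Icc (0:ℝ) 1)
    (hφ1 : ∀ x, T x > k → φ x = 1) (hφ2 : ∀ x, T x = k → φ x = γ)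
    (hφ3 : ∀ x, T x < k → φ x = 0) (hφα : ∑' x, φ x * p₀ x = α)
    (ψ : 𝒳 → ℝ) (hψ01 : ∀ x, ψ x ∈ Set.Icc (0:ℝ) 1)
    (kstar : ℕ) (γstar : ℝ) (hγstar : γstar ∈ Set.Icc (0:ℝ) 1)
    (hψ1 : ∀ x, R x < kstar → ψ x = 1) (hψ2 : ∀ x, R x = kstar → ψ x = γstar)
    (hψ3 : ∀ x, R x > kstar → ψ x = 0) (hψα : ∑' x, ψ x * p₀ x = α) :
    ∀ θ : Θ, (∑' x, if φ x = 1 then p θ x else 0) ≤ ∑' x, if ψ x = 1 then p θ x else 0 :=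
  stmt_4_general p hp hpsum θ₀ p₀ hnull hp₀pos T R hagree α φ hφ01 k γ hφ1 hφ2 hφ3 hφα ψ hψ01 kstar
    hψ1 hψ3 hψα
end

section
/- If R is injective and agrees with T, then for every θ ∈ Θ and every t ∈ [0,1], Pr_θ{P^{MD}(X) ≤ t} ≥ Pr_θ{P^T(X) ≤ t}; that is, the MD natural p-value is stochastically less than or equal to the natural p-value based on T under every distribution in the family. -/
/-!
Since `R` agrees with `T`, `R y ≤ R x` forces `T y ≥ T x`, so the event defining `P^{MD}(x)`
is contained in the one defining `P^T(x)` and `P^{MD} ≤ P^T` pointwise. Hence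
`{P^T ≤ t} ⊆ {P^{MD} ≤ t}`, and the mass of an event is monotone under every pmf.
-/

theorem Summable.of_tsum_ne_zero {α M : Type*} [AddCommMonoid M] [TopologicalSpace M]
    {f : α → M} (h : ∑' x, f x ≠ 0) : Summable f := by
  by_contra hf
  exact h (tsum_eq_zero_of_not_summable hf)

theorem Summable.ite_of_nonneg {α : Type*} {f : α → ℝ} (hf : Summable f) (hf₀ : ∀ x, 0 ≤ f x)
    (P : α → Prop) [DecidablePred P] : Summable fun x ↦ if P x then f x else 0 :=
  hf.of_nonneg_of_le (fun x ↦ by split_ifs <;> simp [hf₀ x]) (fun x ↦ by split_ifs <;> simp [hf₀ x])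

theorem tsum_ite_le_tsum_ite_of_imp {α : Type*} {f : α → ℝ} (hf : Summable f) (hf₀ : ∀ x, 0 ≤ f x)
    {P Q : α → Prop} [DecidablePred P] [DecidablePred Q] (hPQ : ∀ x, P x → Q x) :
    ∑' x, (if P x then f x else 0) ≤ ∑' x, if Q x then f x else 0 := by
  refine Summable.tsum_le_tsum (fun x ↦ ?_) (hf.ite_of_nonneg hf₀ P) (hf.ite_of_nonneg hf₀ Q)
  by_cases hP : P x
  · simp [hP, hPQ x hP]
  · by_cases hQ : Q x <;> simp [hP, hQ, hf₀ x]

theorem stmt_7_general {𝒳 : Type*} {Θ : Type*}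
    (p : Θ → 𝒳 → ℝ) (hp : ∀ θ x, 0 ≤ p θ x) (hpsum : ∀ θ, ∑' x, p θ x = 1)
    (θ₀ : Θ) (p₀ : 𝒳 → ℝ) (hnull : p θ₀ = p₀)
    (T : 𝒳 → ℝ) (R : 𝒳 → ℕ)
    (hagree : ∀ x y, T x > T y → R x < R y)
    (PT PMD : 𝒳 → ℝ)
    (hPT : ∀ x, PT x = ∑' y, if T y ≥ T x then p₀ y else 0)
    (hPMD : ∀ x, PMD x = ∑' y, if R y ≤ R x then p₀ y else 0) :
    ∀ θ : Θ, ∀ t ∈ Set.Icc (0:ℝ) 1,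
      (∑' x, if PMD x ≤ t then p θ x else 0) ≥ ∑' x, if PT x ≤ t then p θ x else 0 := by
  have summable_p (θ : Θ) : Summable (p θ) := .of_tsum_ne_zero (by simp [hpsum θ])
  have hPMD_le_PT (x : 𝒳) : PMD x ≤ PT x := by
    rw [hPMD, hPT, ← hnull]
    exact tsum_ite_le_tsum_ite_of_imp (summable_p θ₀) (hp θ₀)
      fun y hy ↦ not_lt.1 fun hlt ↦ (hagree x y hlt).not_ge hy
  intro θ t _
  exact tsum_ite_le_tsum_ite_of_imp (summable_p θ) (hp θ) fun x hx ↦ (hPMD_le_PT x).trans hx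

/-- If `R` is injective and agrees with `T`, then for every `θ ∈ Θ`
and every `t ∈ [0,1]`, `Pr_θ{P^{MD}(X) ≤ t} ≥ Pr_θ{P^T(X) ≤ t}`: the MD natural
p-value `P^{MD}(x) = Pr₀{R(X) ≤ R(x)}` is stochastically less than or equal to
the natural p-value `P^T(x) = Pr₀{T(X) ≥ T(x)}` under every `p_θ`. -/
theorem stmt_7 {𝒳 : Type*} [Countable 𝒳] {Θ : Type*}
    (p : Θ → 𝒳 → ℝ) (hp : ∀ θ x, 0 ≤ p θ x) (hpsum : ∀ θ, ∑' x, p θ x = 1)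
    (θ₀ : Θ) (p₀ : 𝒳 → ℝ) (hnull : p θ₀ = p₀)
    (T : 𝒳 → ℝ) (R : 𝒳 → ℕ) (hRinj : Function.Injective R)
    (hagree : ∀ x y, T x > T y → R x < R y)
    (PT PMD : 𝒳 → ℝ)
    (hPT : ∀ x, PT x = ∑' y, if T y ≥ T x then p₀ y else 0)
    (hPMD : ∀ x, PMD x = ∑' y, if R y ≤ R x then p₀ y else 0) :
    ∀ θ : Θ, ∀ t ∈ Set.Icc (0:ℝ) 1,
      (∑' x, if PMD x ≤ t then p θ x else 0) ≥ ∑' x, if PT x ≤ t then p θ x else 0 :=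
  stmt_7_general p hp hpsum θ₀ p₀ hnull T R hagree PT PMD hPT hPMD
end

section
/- Assume R is injective and agrees with T, p₀(x) > 0 for every x ∈ 𝒳, and T is sufficient for the family. Then the randomized p-value based on T and the minimally randomized p-value based on R are equal in distribution under every θ ∈ Θ: for every θ ∈ Θ and t ∈ [0,1], Σ_x p_θ(x)·Leb{u ∈ [0,1] : P^{MD}(x,u) ≤ t} = Σ_x p_θ(x)·Leb{u ∈ [0,1] : P^T(x,u) ≤ t}, where Leb denotes Lebesgue measure. -/
open MeasureTheory

/-!
For `b > 0`, the set of `u ∈ [0,1]` with `a + u b ≤ t` has length `(min t (a + b) - min t a) / b`.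
By sufficiency, `p_θ = c_v · p₀` on each fibre `{T = v}`, so it suffices to compare the two sides
fibre by fibre. Because `R` agrees with `T`, the intervals `[P₀(R < R x), P₀(R < R x) + p₀ x]` of
the points `x` of the fibre, taken in increasing `R`-order, tile `[P₀(T > v), P₀(T ≥ v)]`; hence
the increments of `min t` over them telescope to its increment over the whole interval, which is
what `P^T` sees.
-/

lemma toReal_volume_setOf_affine_le (a b t : ℝ) (hb : 0 < b) :
    (volume {u : ℝ | u ∈ Set.Icc (0:ℝ) 1 ∧ a + u * b ≤ t}).toReal
      = (min t (a + b) - min t a) / b := by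
  have hset : {u : ℝ | u ∈ Set.Icc (0:ℝ) 1 ∧ a + u * b ≤ t}
      = Set.Icc 0 (min 1 ((t - a) / b)) := by
    ext u
    simp only [Set.mem_ofPred_eq, Set.mem_Icc, le_min_iff, le_div_iff₀ hb]
    constructor
    · rintro ⟨⟨h1, h2⟩, h3⟩; exact ⟨h1, h2, by linarith⟩
    · rintro ⟨h1, h2, h3⟩; exact ⟨⟨h1, h2⟩, by linarith⟩
  rw [hset, Real.volume_Icc, ENNReal.toReal_ofReal', eq_div_iff hb.ne', sub_zero,
    max_mul_of_nonneg _ _ hb.le, min_mul_of_nonneg _ _ hb.le, div_mul_cancel₀ _ hb.ne']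
  simp only [min_def, max_def]
  split_ifs <;> linarith

section
open Finset

lemma tsum_ite_lt_eq_sum_range_extend {ι M : Type*} [AddCommMonoid M] [TopologicalSpace M]
    {r : ι → ℕ} (hr : Function.Injective r) (w : ι → M) (n : ℕ) :
    ∑' i, (if r i < n then w i else 0) = ∑ k ∈ range n, Function.extend r w 0 k := by
  calc ∑' i, (if r i < n then w i else 0)
      = ∑' i, (fun k => if k < n then Function.extend r w 0 k else 0) (r i) := by
        simp [hr.extend_apply]
    _ = ∑' k : ℕ, if k < n then Function.extend r w 0 k else 0 := by
        refine hr.tsum_eq (f := fun k => if k < n then Function.extend r w 0 k else 0) ?_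
        intro k hk
        by_contra h
        exact hk (by simp [Function.extend_apply' _ _ _ h])
    _ = ∑ k ∈ range n, Function.extend r w 0 k := by
        rw [tsum_eq_sum (s := range n) (by simp_all)]
        exact sum_congr rfl fun k hk => if_pos (mem_range.1 hk)

lemma HasSum.hasSum_monotone_increments {v : ℕ → ℝ} {L : ℝ} (hL : HasSum v L)
    (hv : ∀ n, 0 ≤ v n) {g : ℝ → ℝ} (hg : Monotone g) (hgc : Continuous g) :
    HasSum (fun n => g (∑ k ∈ range n, v k + v n) - g (∑ k ∈ range n, v k)) (g L - g 0) := by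
  rw [hasSum_iff_tendsto_nat_of_nonneg fun n => sub_nonneg.2 (hg (le_add_of_nonneg_right (hv n)))]
  simp only [← sum_range_succ, sum_range_sub (fun n => g (∑ k ∈ range n, v k)), sum_range_zero]
  exact ((hgc.tendsto L).comp hL.tendsto_sum_nat).sub_const _

end

lemma HasSum.hasSum_increments_of_rank {ι : Type*} {r : ι → ℕ} (hr : Function.Injective r)
    {w : ι → ℝ} {L : ℝ} (hL : HasSum w L) (hw : ∀ i, 0 ≤ w i) {g : ℝ → ℝ} (hg : Monotone g)
    (hgc : Continuous g) :
    HasSum (fun i => g ((∑' j, if r j < r i then w j else 0) + w i)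
      - g (∑' j, if r j < r i then w j else 0)) (g L - g 0) := by
  set v := Function.extend r w 0
  have hv_off : ∀ n ∉ Set.range r, v n = 0 := fun n hn => Function.extend_apply' _ _ _ hn
  have hvL : HasSum v L := (hr.hasSum_iff hv_off).1 (by rwa [Function.extend_comp hr])
  have hv : ∀ n, 0 ≤ v n := by
    intro n
    by_cases hn : n ∈ Set.range r
    · obtain ⟨i, rfl⟩ := hn
      simpa [v, hr.extend_apply] using hw i
    · exact (hv_off n hn).ge
  have := hvL.hasSum_monotone_increments hv hg hgc
  rw [← hr.hasSum_iff fun n hn => by simp [hv_off n hn]] at this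
  simpa [Function.comp_def, tsum_ite_lt_eq_sum_range_extend hr, v, hr.extend_apply] using this

lemma Summable.mul_toReal_volume {ι : Type*} {f : ι → ℝ} (hf : Summable f) (P : ι → ℝ → Prop) :
    Summable fun i => f i * (volume {u : ℝ | u ∈ Set.Icc (0:ℝ) 1 ∧ P i u}).toReal := by
  refine hf.abs.of_norm_bounded fun i => ?_
  rw [Real.norm_eq_abs, abs_mul, abs_of_nonneg ENNReal.toReal_nonneg]
  refine mul_le_of_le_one_right (abs_nonneg _) ?_
  have : volume {u : ℝ | u ∈ Set.Icc (0:ℝ) 1 ∧ P i u} ≤ 1 :=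
    (measure_mono fun u hu => hu.1).trans_eq (by simp)
  exact ENNReal.toReal_le_of_le_ofReal zero_le_one (by simpa using this)

lemma Summable.ite_zero {ι α : Type*} [AddCommGroup α] [UniformSpace α] [IsUniformAddGroup α]
    [CompleteSpace α] {f : ι → α} (hf : Summable f) (P : ι → Prop) [DecidablePred P] :
    Summable fun i => if P i then f i else 0 :=
  (hf.indicator {i | P i}).congr fun i => by by_cases h : P i <;> simp [h]

section
variable {𝒳 : Type*} {p₀ : 𝒳 → ℝ} {T : 𝒳 → ℝ} {R : 𝒳 → ℕ}

lemma tsum_ite_fiber_pos (hp₀ : Summable p₀) (hp₀_pos : ∀ x, 0 < p₀ x) (x : 𝒳) :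
    0 < ∑' y, if T y = T x then p₀ y else 0 :=
  (hp₀_pos x).trans_le <| by
    simpa using (hp₀.ite_zero (T · = T x)).le_tsum x fun y _ => ite_nonneg (hp₀_pos y).le le_rfl

lemma tsum_ite_rank_lt_eq_add (hp₀ : Summable p₀) (hagree : ∀ x y, T x > T y → R x < R y)
    (x : 𝒳) :
    (∑' y, if R y < R x then p₀ y else 0) = (∑' y, if T x < T y then p₀ y else 0)
      + ∑' y, if R y < R x then (if T y = T x then p₀ y else 0) else 0 := by
  rw [← (hp₀.ite_zero _).tsum_add ((hp₀.ite_zero _).ite_zero _)]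
  refine tsum_congr fun y => ?_
  rcases lt_trichotomy (T y) (T x) with h | h | h
  · simp [(hagree x y h).not_gt, h.not_gt]
  · simp [h]
  · simp [hagree y x h, h, h.ne']

lemma tsum_fiber_increments (hp₀ : Summable p₀) (hp₀_nonneg : ∀ x, 0 ≤ p₀ x)
    (hR : Function.Injective R) (hagree : ∀ x y, T x > T y → R x < R y) (t v : ℝ) :
    ∑' x : T ⁻¹' {v}, (min t ((∑' y, if R y < R x then p₀ y else 0) + p₀ x)
      - min t (∑' y, if R y < R x then p₀ y else 0))
      = min t ((∑' y, if v < T y then p₀ y else 0) + ∑' y, if T y = v then p₀ y else 0)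
        - min t (∑' y, if v < T y then p₀ y else 0) := by
  set S := ∑' y, if v < T y then p₀ y else 0
  have key := (hp₀.ite_zero (T · = v)).hasSum.hasSum_increments_of_rank hR
    (fun y => ite_nonneg (hp₀_nonneg y) le_rfl) (g := fun s => min t (S + s))
    (fun a b hab => min_le_min_left t (by linarith)) (by fun_prop)
  rw [← hasSum_subtype_iff_of_support_subset (s := T ⁻¹' {v})] at key
  · rw [add_zero] at key
    refine .trans (tsum_congr fun x => ?_) key.tsum_eq
    obtain ⟨x, hx : T x = v⟩ := x
    subst hx
    simp [tsum_ite_rank_lt_eq_add hp₀ hagree x, S, add_assoc]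
  · intro x hx
    by_contra hxv
    exact hx (by simp [show T x ≠ v from hxv])

lemma tsum_fiber_eq_of_sufficient (p : 𝒳 → ℝ) (hp₀ : Summable p₀) (hp₀_pos : ∀ x, 0 < p₀ x)
    (hR : Function.Injective R) (hagree : ∀ x y, T x > T y → R x < R y)
    (hsuff : ∀ x, p x * (∑' y, if T y = T x then p₀ y else 0)
      = p₀ x * ∑' y, if T y = T x then p y else 0) (t v : ℝ) :
    ∑' x : T ⁻¹' {v}, p x * ((min t ((∑' y, if R y < R x then p₀ y else 0) + p₀ x)
      - min t (∑' y, if R y < R x then p₀ y else 0)) / p₀ x)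
      = ∑' x : T ⁻¹' {v}, p x * ((min t ((∑' y, if T x < T y then p₀ y else 0)
          + ∑' y, if T y = T x then p₀ y else 0) - min t (∑' y, if T x < T y then p₀ y else 0))
          / ∑' y, if T y = T x then p₀ y else 0) := by
  set q := ∑' y, if T y = v then p₀ y else 0
  set Q := ∑' y, if T y = v then p y else 0
  set F := min t ((∑' y, if v < T y then p₀ y else 0) + q)
    - min t (∑' y, if v < T y then p₀ y else 0)
  calc _ = ∑' x : T ⁻¹' {v}, Q / q * (min t ((∑' y, if R y < R x then p₀ y else 0) + p₀ x)
          - min t (∑' y, if R y < R x then p₀ y else 0)) := by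
        refine tsum_congr fun ⟨x, hx⟩ => ?_
        obtain rfl : T x = v := hx
        have hq : 0 < q := tsum_ite_fiber_pos hp₀ hp₀_pos x
        have hpx : p x = Q / q * p₀ x := by
          rw [div_mul_eq_mul_div, eq_div_iff hq.ne', mul_comm Q]
          exact hsuff x
        rw [hpx, mul_assoc, mul_div_cancel₀ _ (hp₀_pos x).ne']
    _ = Q / q * F := by
        rw [tsum_mul_left, tsum_fiber_increments hp₀ (fun x => (hp₀_pos x).le) hR hagree]
    _ = (∑' x : T ⁻¹' {v}, p x) * (F / q) := by
        have hQ : ∑' x : T ⁻¹' {v}, p x = Q := by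
          rw [tsum_subtype]
          exact tsum_congr fun x => by by_cases h : T x = v <;> simp [h]
        rw [hQ, mul_div_assoc', div_mul_eq_mul_div]
    _ = _ := by
        rw [← tsum_mul_right]
        refine tsum_congr fun ⟨x, hx⟩ => ?_
        obtain rfl : T x = v := hx
        rfl
end

theorem stmt_12_general {𝒳 : Type*} {Θ : Type*}
    (p : Θ → 𝒳 → ℝ) (hpsum : ∀ θ, ∑' x, p θ x = 1)
    (θ₀ : Θ) (p₀ : 𝒳 → ℝ) (hnull : p θ₀ = p₀)
    (hp₀pos : ∀ x, 0 < p₀ x)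
    (T : 𝒳 → ℝ) (R : 𝒳 → ℕ) (hRinj : Function.Injective R)
    (hagree : ∀ x y, T x > T y → R x < R y)
    (hsuff : ∀ (θ : Θ) (x : 𝒳),
      p θ x * (∑' y, if T y = T x then p₀ y else 0)
        = p₀ x * ∑' y, if T y = T x then p θ y else 0)
    (PT PMD : 𝒳 → ℝ → ℝ)
    (hPT : ∀ x u, PT x u = (∑' y, if T x < T y then p₀ y else 0)
      + u * ∑' y, if T y = T x then p₀ y else 0)
    (hPMD : ∀ x u, PMD x u = (∑' y, if R y < R x then p₀ y else 0)
      + u * ∑' y, if R y = R x then p₀ y else 0) :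
    ∀ θ : Θ, ∀ t ∈ Set.Icc (0:ℝ) 1,
      (∑' x, p θ x * (volume {u : ℝ | u ∈ Set.Icc (0:ℝ) 1 ∧ PMD x u ≤ t}).toReal)
        = ∑' x, p θ x * (volume {u : ℝ | u ∈ Set.Icc (0:ℝ) 1 ∧ PT x u ≤ t}).toReal := by
  intro θ t _
  have hsum : Summable (p θ) := by
    by_contra h
    simpa [tsum_eq_zero_of_not_summable h] using hpsum θ
  have hsum₀ : Summable p₀ := by
    by_contra h
    simpa [hnull, tsum_eq_zero_of_not_summable h] using hpsum θ₀
  have hMD : ∀ x, (volume {u : ℝ | u ∈ Set.Icc (0:ℝ) 1 ∧ PMD x u ≤ t}).toReal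
      = (min t ((∑' y, if R y < R x then p₀ y else 0) + p₀ x)
        - min t (∑' y, if R y < R x then p₀ y else 0)) / p₀ x := fun x => by
    have hRx : (∑' y, if R y = R x then p₀ y else 0) = p₀ x :=
      (tsum_eq_single x fun y hy => if_neg (hRinj.ne hy)).trans (if_pos rfl)
    simp only [hPMD, hRx]
    exact toReal_volume_setOf_affine_le _ _ _ (hp₀pos x)
  have hT : ∀ x, (volume {u : ℝ | u ∈ Set.Icc (0:ℝ) 1 ∧ PT x u ≤ t}).toReal
      = (min t ((∑' y, if T x < T y then p₀ y else 0) + ∑' y, if T y = T x then p₀ y else 0)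
        - min t (∑' y, if T x < T y then p₀ y else 0)) / ∑' y, if T y = T x then p₀ y else 0 :=
    fun x => by
      simp only [hPT]
      exact toReal_volume_setOf_affine_le _ _ _ (tsum_ite_fiber_pos hsum₀ hp₀pos x)
  rw [← ((hsum.mul_toReal_volume fun x u => PMD x u ≤ t).hasSum.tsum_fiberwise T).tsum_eq,
    ← ((hsum.mul_toReal_volume fun x u => PT x u ≤ t).hasSum.tsum_fiberwise T).tsum_eq]
  refine tsum_congr fun v => ?_
  simp only [hMD, hT]
  exact tsum_fiber_eq_of_sufficient (p θ) hsum₀ hp₀pos hRinj hagree (hsuff θ) t v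

/-- If `R` is injective and agrees with `T`, `p₀ > 0` everywhere,
and `T` is sufficient for the family, then the randomized p-value based on `T`
and the minimally randomized p-value based on `R` are equal in distribution
under every `θ`: for every `t ∈ [0,1]`,
`Σ_x p_θ(x)·Leb{u ∈ [0,1] : P^{MD}(x,u) ≤ t} = Σ_x p_θ(x)·Leb{u ∈ [0,1] : P^T(x,u) ≤ t}`. -/
theorem stmt_12 {𝒳 : Type*} [Countable 𝒳] {Θ : Type*}
    (p : Θ → 𝒳 → ℝ) (hp : ∀ θ x, 0 ≤ p θ x) (hpsum : ∀ θ, ∑' x, p θ x = 1)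
    (θ₀ : Θ) (p₀ : 𝒳 → ℝ) (hnull : p θ₀ = p₀)
    (hp₀pos : ∀ x, 0 < p₀ x)
    (T : 𝒳 → ℝ) (R : 𝒳 → ℕ) (hRinj : Function.Injective R)
    (hagree : ∀ x y, T x > T y → R x < R y)
    (hsuff : ∀ (θ : Θ) (x : 𝒳),
      p θ x * (∑' y, if T y = T x then p₀ y else 0)
        = p₀ x * ∑' y, if T y = T x then p θ y else 0)
    (PT PMD : 𝒳 → ℝ → ℝ)
    (hPT : ∀ x u, PT x u = (∑' y, if T x < T y then p₀ y else 0)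
      + u * ∑' y, if T y = T x then p₀ y else 0)
    (hPMD : ∀ x u, PMD x u = (∑' y, if R y < R x then p₀ y else 0)
      + u * ∑' y, if R y = R x then p₀ y else 0) :
    ∀ θ : Θ, ∀ t ∈ Set.Icc (0:ℝ) 1,
      (∑' x, p θ x * (volume {u : ℝ | u ∈ Set.Icc (0:ℝ) 1 ∧ PMD x u ≤ t}).toReal)
        = ∑' x, p θ x * (volume {u : ℝ | u ∈ Set.Icc (0:ℝ) 1 ∧ PT x u ≤ t}).toReal :=
  stmt_12_general p hpsum θ₀ p₀ hnull hp₀pos T R hRinj hagree hsuff PT PMD hPT hPMD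
end

section
/- Assume R is injective and agrees with T. Then for every probability mass function p on 𝒳 and every x ∈ 𝒳, Pr_p{R(X) = R(x)} ≤ Pr_p{T(X) = T(x)}; consequently, for every x ∈ 𝒳 the variance over U ~ Uniform[0,1] of the minimally randomized p-value is at most that of the randomized p-value based on T: ∫₀¹ (P^{MD}(x,u) − P^{MD}(x,1/2))² du = (1/12)·Pr₀{R(X) = R(x)}² ≤ (1/12)·Pr₀{T(X) = T(x)}² = ∫₀¹ (P^T(x,u) − P^T(x,1/2))² du. -/
/-!
Injectivity of `R` makes each level set `{R = R x}` the singleton `{x}`, which lies inside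
the level set `{T = T x}`; so the probability of a rank tie is at most that of a tie in `T`.
For fixed `x` both p-values are affine in `u` with slope the tie probability, and an affine
function `a + u b` of `U ~ Uniform[0,1]` has variance `b² / 12`.
-/

open Function

theorem tsum_ite_eq_of_injective {α β M : Type*} [AddCommMonoid M] [TopologicalSpace M]
    [DecidableEq β] {R : α → β} (hR : Injective R) (q : α → M) (x : α) :
    (∑' y, if R y = R x then q y else 0) = q x :=
  (tsum_eq_single x fun _ hy => if_neg (hR.ne hy)).trans (if_pos rfl)

theorem le_tsum_ite_of_nonneg {α : Type*} {q : α → ℝ} (hq : ∀ y, 0 ≤ q y) (hs : Summable q)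
    {P : α → Prop} [DecidablePred P] {x : α} (hx : P x) :
    q x ≤ ∑' y, if P y then q y else 0 := by
  have h_nonneg (y : α) : 0 ≤ if P y then q y else 0 := by split_ifs <;> simp [hq y]
  have h_le (y : α) : (if P y then q y else 0) ≤ q y := by split_ifs <;> simp [hq y]
  simpa [hx] using (hs.of_nonneg_of_le h_nonneg h_le).le_tsum x fun y _ => h_nonneg y

theorem summable_of_tsum_eq_one_s13 {α : Type*} {q : α → ℝ} (hq : ∑' y, q y = 1) : Summable q := by
  by_contra h
  simp [tsum_eq_zero_of_not_summable h] at hq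

theorem integral_sq_affine_sub_midpoint (a b : ℝ) :
    ∫ u in (0:ℝ)..1, ((a + u * b) - (a + 1/2 * b))^2 = 1/12 * b^2 := by
  have h : ∀ u : ℝ, ((a + u * b) - (a + 1/2 * b))^2 = (u - 1/2)^2 * b^2 := fun u => by ring
  simp_rw [h]
  rw [intervalIntegral.integral_mul_const,
    intervalIntegral.integral_comp_sub_right (fun u => u^2) (1/2), integral_pow]
  norm_num

theorem stmt_13_general {𝒳 : Type*}
    (p₀ : 𝒳 → ℝ) (hp₀ : ∀ x, 0 ≤ p₀ x) (hp₀sum : ∑' x, p₀ x = 1)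
    (T : 𝒳 → ℝ) (R : 𝒳 → ℕ) (hRinj : Function.Injective R)
    (PT PMD : 𝒳 → ℝ → ℝ)
    (hPT : ∀ x u, PT x u = (∑' y, if T x < T y then p₀ y else 0)
      + u * ∑' y, if T y = T x then p₀ y else 0)
    (hPMD : ∀ x u, PMD x u = (∑' y, if R y < R x then p₀ y else 0)
      + u * ∑' y, if R y = R x then p₀ y else 0) :
    (∀ (q : 𝒳 → ℝ), (∀ y, 0 ≤ q y) → (∑' y, q y) = 1 → ∀ x,
        (∑' y, if R y = R x then q y else 0) ≤ ∑' y, if T y = T x then q y else 0)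
      ∧ ∀ x,
        (∫ u in (0:ℝ)..1, (PMD x u - PMD x (1/2))^2)
            = (1/12) * (∑' y, if R y = R x then p₀ y else 0)^2
          ∧ (1/12) * (∑' y, if R y = R x then p₀ y else 0)^2
            ≤ (1/12) * (∑' y, if T y = T x then p₀ y else 0)^2
          ∧ (1/12) * (∑' y, if T y = T x then p₀ y else 0)^2
            = ∫ u in (0:ℝ)..1, (PT x u - PT x (1/2))^2 := by
  have tie_le : ∀ (q : 𝒳 → ℝ), (∀ y, 0 ≤ q y) → (∑' y, q y) = 1 → ∀ x,
      (∑' y, if R y = R x then q y else 0) ≤ ∑' y, if T y = T x then q y else 0 :=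
    fun q hq hq1 x => (tsum_ite_eq_of_injective hRinj q x).trans_le
      (le_tsum_ite_of_nonneg hq (summable_of_tsum_eq_one_s13 hq1) rfl)
  refine ⟨tie_le, fun x => ⟨?_, ?_, ?_⟩⟩
  · simp only [hPMD]
    exact integral_sq_affine_sub_midpoint _ _
  · have hRtie_nonneg : 0 ≤ ∑' y, if R y = R x then p₀ y else 0 :=
      tsum_nonneg fun y => by split_ifs <;> simp [hp₀ y]
    exact mul_le_mul_of_nonneg_left
      (pow_le_pow_left₀ hRtie_nonneg (tie_le p₀ hp₀ hp₀sum x) 2) (by norm_num)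
  · simp only [hPT]
    exact (integral_sq_affine_sub_midpoint _ _).symm

/-- If `R` is injective and agrees with `T`, then for every pmf
`p` on `𝒳` and every `x`, `Pr_p{R(X) = R(x)} ≤ Pr_p{T(X) = T(x)}`;
consequently, for every `x` the variance over `U ~ Uniform[0,1]` of the
minimally randomized p-value is at most that of the randomized p-value based
on `T`: `∫₀¹ (P^{MD}(x,u) − P^{MD}(x,1/2))² du = (1/12)·Pr₀{R(X)=R(x)}²
≤ (1/12)·Pr₀{T(X)=T(x)}² = ∫₀¹ (P^T(x,u) − P^T(x,1/2))² du`. -/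
theorem stmt_13 {𝒳 : Type*} [Countable 𝒳]
    (p₀ : 𝒳 → ℝ) (hp₀ : ∀ x, 0 ≤ p₀ x) (hp₀sum : ∑' x, p₀ x = 1)
    (T : 𝒳 → ℝ) (R : 𝒳 → ℕ) (hRinj : Function.Injective R)
    (hagree : ∀ x y, T x > T y → R x < R y)
    (PT PMD : 𝒳 → ℝ → ℝ)
    (hPT : ∀ x u, PT x u = (∑' y, if T x < T y then p₀ y else 0)
      + u * ∑' y, if T y = T x then p₀ y else 0)
    (hPMD : ∀ x u, PMD x u = (∑' y, if R y < R x then p₀ y else 0)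
      + u * ∑' y, if R y = R x then p₀ y else 0) :
    (∀ (q : 𝒳 → ℝ), (∀ y, 0 ≤ q y) → (∑' y, q y) = 1 → ∀ x,
        (∑' y, if R y = R x then q y else 0) ≤ ∑' y, if T y = T x then q y else 0)
      ∧ ∀ x,
        (∫ u in (0:ℝ)..1, (PMD x u - PMD x (1/2))^2)
            = (1/12) * (∑' y, if R y = R x then p₀ y else 0)^2
          ∧ (1/12) * (∑' y, if R y = R x then p₀ y else 0)^2
            ≤ (1/12) * (∑' y, if T y = T x then p₀ y else 0)^2
          ∧ (1/12) * (∑' y, if T y = T x then p₀ y else 0)^2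
            = ∫ u in (0:ℝ)..1, (PT x u - PT x (1/2))^2 :=
  stmt_13_general p₀ hp₀ hp₀sum T R hRinj PT PMD hPT hPMD
end

section
/- Assume R is injective and agrees with T, p₀(x) > 0 for every x ∈ 𝒳, and T is sufficient for the family. Then for every s ∈ [0,1], ∫₀^s Pr₀{Q^{MD}(X) ≤ α} dα ≥ ∫₀^s Pr₀{Q^T(X) ≤ α} dα; that is, the integrated null CDF of the MD mid-p-value dominates that of the mid-p-value based on T at every point. -/
/-!
For a nonnegative statistic `Q`, `∫₀ˢ Pr₀{Q ≤ α} dα = E₀ (s - Q)⁺`. Because `R` agrees with `T`,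
`Q^{MD}` only breaks the ties of `T`: `Q^{MD}(x) - Q^T(x)` is a `p₀`-weighted sum over the level
set of `T(x)` of the antisymmetric weights `1{R y < R x} + 1{R y = R x}/2 - 1/2`, so on every
level set of `T` the `p₀`-average of `Q^{MD}` is that of `Q^T`. Thus `Q^{MD}` is a
mean-preserving spread of `Q^T` given `T`, and the convexity of `q ↦ (s - q)⁺`, used through its
subgradient `1{Q^T < s}` (a function of `T`), gives `E₀ (s - Q^T)⁺ ≤ E₀ (s - Q^{MD})⁺`.
-/

open MeasureTheory Set OrderDual

section

variable {α β γ : Type*}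

lemma ite_le_eq_indicator (c q : ℝ) :
    (fun a : ℝ => if q ≤ a then c else 0) = (Ici q).indicator fun _ => c := by
  ext a; simp [indicator_apply]

lemma intervalIntegral_ite_le (c : ℝ) {q s : ℝ} (hq : 0 ≤ q) (hs : 0 ≤ s) :
    ∫ a in (0:ℝ)..s, (if q ≤ a then c else 0) = c * max (s - q) 0 := by
  have hset : (Ici q ∩ Ioc 0 s : Set ℝ) =ᵐ[volume] Ioc q s := by
    have h := (Ioi_ae_eq_Ici (a := q) (μ := volume)).symm.inter (ae_eq_refl (Ioc 0 s))
    rwa [inter_comm (Ioi q), Ioc_inter_Ioi, max_eq_right hq] at h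
  rw [intervalIntegral.integral_of_le hs, ite_le_eq_indicator,
    integral_indicator_const c measurableSet_Ici, measureReal_restrict_apply measurableSet_Ici,
    measureReal_congr hset, Real.volume_real_Ioc,
    smul_eq_mul, mul_comm]

lemma Summable.mul_of_abs_le {p f : α → ℝ} (hps : Summable p) (hp : ∀ x, 0 ≤ p x) {C : ℝ}
    (hf : ∀ x, |f x| ≤ C) : Summable fun x => p x * f x :=
  (hps.mul_left C).of_norm_bounded fun x => by
    rw [Real.norm_eq_abs, abs_mul, abs_of_nonneg (hp x), mul_comm]
    exact mul_le_mul_of_nonneg_right (hf x) (hp x)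

lemma summable_mul_max_sub_zero {p Q : α → ℝ} (hps : Summable p) (hp : ∀ x, 0 ≤ p x)
    (hQ : ∀ x, 0 ≤ Q x) {s : ℝ} (hs : 0 ≤ s) : Summable fun x => p x * max (s - Q x) 0 :=
  hps.mul_of_abs_le hp fun x => by
    rw [abs_of_nonneg (le_max_right _ _)]
    exact max_le (by linarith [hQ x]) hs

lemma intervalIntegral_tsum_ite_le [Countable α] {p Q : α → ℝ} (hps : Summable p)
    (hp : ∀ x, 0 ≤ p x) (hQ : ∀ x, 0 ≤ Q x) {s : ℝ} (hs : 0 ≤ s) :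
    ∫ a in (0:ℝ)..s, ∑' x, (if Q x ≤ a then p x else 0) = ∑' x, p x * max (s - Q x) 0 := by
  have hterm (x : α) : ∫ a in Ioc 0 s, (if Q x ≤ a then p x else 0) = p x * max (s - Q x) 0 := by
    rw [← intervalIntegral.integral_of_le hs, intervalIntegral_ite_le (p x) (hQ x) hs]
  rw [intervalIntegral.integral_of_le hs]
  have hnorm (x : α) : (fun a : ℝ => ‖if Q x ≤ a then p x else 0‖)
      = fun a => if Q x ≤ a then p x else 0 := by
    ext a; split_ifs <;> simp [abs_of_nonneg (hp x)]
  rw [← integral_tsum_of_summable_integral_norm, tsum_congr hterm]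
  · intro x
    rw [ite_le_eq_indicator]
    exact (integrable_const _).indicator measurableSet_Ici
  · simp only [hnorm, hterm]
    exact summable_mul_max_sub_zero hps hp hQ hs

lemma tsum_tsum_mul_eq_zero_of_antisymm {p : α → ℝ} (hps : Summable p) (hp : ∀ x, 0 ≤ p x)
    {a : α → α → ℝ} {C : ℝ} (ha_le : ∀ x y, |a x y| ≤ C) (ha : ∀ x y, a y x = -a x y) :
    ∑' x, ∑' y, p x * p y * a x y = 0 := by
  have hsum : Summable fun z : α × α => p z.1 * p z.2 * a z.1 z.2 :=
    (hps.mul_of_nonneg hps hp hp).mul_of_abs_le (fun z => mul_nonneg (hp z.1) (hp z.2))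
      fun z => ha_le z.1 z.2
  have hswap : ∑' z : α × α, p z.1 * p z.2 * a z.1 z.2
      = -∑' z : α × α, p z.1 * p z.2 * a z.1 z.2 := by
    conv_lhs => rw [← (Equiv.prodComm α α).tsum_eq]
    rw [← tsum_neg]
    refine tsum_congr fun z => ?_
    simp only [Equiv.prodComm_apply, Prod.fst_swap, Prod.snd_swap]
    rw [ha]
    ring
  rw [← hsum.tsum_prod]
  linarith

section MidP

variable [LinearOrder β] [LinearOrder γ]

noncomputable def midWeight (b c : β) : ℝ :=
  if b < c then 1 else if b = c then 1 / 2 else 0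

lemma midWeight_add_midWeight (b c : β) : midWeight b c + midWeight c b = 1 := by
  unfold midWeight
  rcases lt_trichotomy b c with h | rfl | h
  · simp [h, h.not_gt, h.ne']
  · norm_num
  · simp [h, h.not_gt, h.ne']

lemma midWeight_nonneg (b c : β) : 0 ≤ midWeight b c := by
  unfold midWeight; split_ifs <;> norm_num

lemma midWeight_le_one (b c : β) : midWeight b c ≤ 1 := by
  unfold midWeight; split_ifs <;> norm_num

lemma midWeight_eq_of_refines {b₁ b₂ : β} {r₁ r₂ : γ} (h₁₂ : b₁ < b₂ → r₁ < r₂)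
    (h₂₁ : b₂ < b₁ → r₂ < r₁) :
    midWeight r₁ r₂ = midWeight b₁ b₂ + if b₁ = b₂ then midWeight r₁ r₂ - 1 / 2 else 0 := by
  rcases lt_trichotomy b₁ b₂ with h | rfl | h
  · simp [midWeight, h, h₁₂ h, h.ne]
  · simp [midWeight]
  · simp [midWeight, h.not_gt, h.ne', (h₂₁ h).not_gt, (h₂₁ h).ne']

variable {p : α → ℝ}

/-- Small values of `r` are the extreme ones: `Q^{MD} = midP p₀ R` and
`Q^T = midP p₀ (toDual ∘ T)`. -/
noncomputable def midP (p : α → ℝ) (r : α → β) (x : α) : ℝ :=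
  ∑' y, p y * midWeight (r y) (r x)

lemma summable_mul_midWeight (hps : Summable p) (hp : ∀ x, 0 ≤ p x) (r : α → β) (x : α) :
    Summable fun y => p y * midWeight (r y) (r x) :=
  hps.mul_of_abs_le hp fun y => abs_of_nonneg (midWeight_nonneg (r y) (r x)) ▸ midWeight_le_one _ _

lemma midP_eq (hps : Summable p) (r : α → β) (x : α) :
    midP p r x = (∑' y, if r y < r x then p y else 0)
      + 1 / 2 * ∑' y, if r y = r x then p y else 0 := by
  have hlt : Summable fun y => if r y < r x then p y else 0 :=
    (hps.indicator {y | r y < r x}).congr fun y => by simp [indicator_apply]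
  have heq : Summable fun y => if r y = r x then p y else 0 :=
    (hps.indicator {y | r y = r x}).congr fun y => by simp [indicator_apply]
  rw [← tsum_mul_left, ← hlt.tsum_add (heq.mul_left _)]
  refine tsum_congr fun y => ?_
  unfold midWeight
  split_ifs <;> simp_all [mul_comm]

lemma midP_nonneg (hp : ∀ x, 0 ≤ p x) (r : α → β) (x : α) : 0 ≤ midP p r x :=
  tsum_nonneg fun y => mul_nonneg (hp y) (midWeight_nonneg _ _)

lemma midP_le_tsum (hps : Summable p) (hp : ∀ x, 0 ≤ p x) (r : α → β) (x : α) :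
    midP p r x ≤ ∑' y, p y :=
  (summable_mul_midWeight hps hp r x).tsum_le_tsum
    (fun y => mul_le_of_le_one_right (hp y) (midWeight_le_one _ _)) hps

lemma midP_sub_midP_of_refines (hps : Summable p) (hp : ∀ x, 0 ≤ p x) {b : α → β} {r : α → γ}
    (hr : ∀ x y, b x < b y → r x < r y) (x : α) :
    midP p r x - midP p b x
      = ∑' y, p y * if b y = b x then midWeight (r y) (r x) - 1 / 2 else 0 := by
  unfold midP
  rw [← (summable_mul_midWeight hps hp r x).tsum_sub (summable_mul_midWeight hps hp b x)]
  refine tsum_congr fun y => ?_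
  linear_combination p y * midWeight_eq_of_refines (hr y x) (hr x y)

lemma tsum_mul_mul_midP_sub_midP_eq_zero (hps : Summable p) (hp : ∀ x, 0 ≤ p x) {b : α → β}
    {r : α → γ} (hr : ∀ x y, b x < b y → r x < r y) {g : β → ℝ} {C : ℝ}
    (hg : ∀ c, |g c| ≤ C) :
    ∑' x, p x * (g (b x) * (midP p r x - midP p b x)) = 0 := by
  set d : α → α → ℝ := fun y x => if b y = b x then midWeight (r y) (r x) - 1 / 2 else 0
  have hd_le (y x : α) : |d y x| ≤ 1 := by
    simp only [d]
    split_ifs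
    · rw [abs_le]
      constructor <;> linarith [midWeight_nonneg (r y) (r x), midWeight_le_one (r y) (r x)]
    · simp
  have hd_anti (x y : α) : g (b y) * d x y = -(g (b x) * d y x) := by
    by_cases h : b y = b x
    · simp only [d, if_pos h, if_pos h.symm, h]
      linear_combination g (b x) * midWeight_add_midWeight (r x) (r y)
    · simp only [d, if_neg h, if_neg (Ne.symm h)]
      ring
  calc ∑' x, p x * (g (b x) * (midP p r x - midP p b x))
      = ∑' x, ∑' y, p x * p y * (g (b x) * d y x) := by
        refine tsum_congr fun x => ?_
        rw [midP_sub_midP_of_refines hps hp hr x, ← tsum_mul_left, ← tsum_mul_left]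
        exact tsum_congr fun y => by ring
    _ = 0 := tsum_tsum_mul_eq_zero_of_antisymm hps hp
        (fun x y => by
          rw [abs_mul]
          exact (mul_le_of_le_one_right (abs_nonneg _) (hd_le y x)).trans (hg (b x)))
        hd_anti

end MidP

lemma max_sub_zero_le_add_ite_mul (s u v : ℝ) :
    max (s - u) 0 ≤ max (s - v) 0 + (if u < s then 1 else 0) * (v - u) := by
  split_ifs with h
  · rw [max_eq_left (sub_nonneg.mpr h.le)]
    linarith [le_max_left (s - v) 0]
  · rw [max_eq_right (by linarith), zero_mul, add_zero]
    exact le_max_right _ _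

theorem intervalIntegral_tsum_ite_midP_le_of_refines [Countable α] [LinearOrder β]
    [LinearOrder γ] {p : α → ℝ} (hps : Summable p) (hp : ∀ x, 0 ≤ p x) {b : α → β} {r : α → γ}
    (hr : ∀ x y, b x < b y → r x < r y) {s : ℝ} (hs : 0 ≤ s) :
    ∫ a in (0:ℝ)..s, ∑' x, (if midP p b x ≤ a then p x else 0)
      ≤ ∫ a in (0:ℝ)..s, ∑' x, (if midP p r x ≤ a then p x else 0) := by
  -- `g (b x) = 1{midP p b x < s}`, written as a function of `b x`
  set g : β → ℝ := fun c => if ∑' y, p y * midWeight (b y) c < s then 1 else 0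
  have hg (c : β) : |g c| ≤ 1 := by
    simp only [g]
    split_ifs <;> norm_num
  have hsum_corr : Summable fun x => p x * (g (b x) * (midP p r x - midP p b x)) :=
    hps.mul_of_abs_le hp fun x => by
      have hdiff : |midP p r x - midP p b x| ≤ ∑' y, p y :=
        abs_sub_le_iff.mpr ⟨by linarith [midP_nonneg hp b x, midP_le_tsum hps hp r x],
          by linarith [midP_nonneg hp r x, midP_le_tsum hps hp b x]⟩
      rw [abs_mul]
      exact (mul_le_of_le_one_left (abs_nonneg _) (hg _)).trans hdiff
  rw [intervalIntegral_tsum_ite_le hps hp (midP_nonneg hp b) hs,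
    intervalIntegral_tsum_ite_le hps hp (midP_nonneg hp r) hs]
  calc ∑' x, p x * max (s - midP p b x) 0
      ≤ ∑' x, (p x * max (s - midP p r x) 0 + p x * (g (b x) * (midP p r x - midP p b x))) :=
        (summable_mul_max_sub_zero hps hp (midP_nonneg hp b) hs).tsum_le_tsum
          (fun x => by
            rw [← mul_add]
            exact mul_le_mul_of_nonneg_left
              (max_sub_zero_le_add_ite_mul s (midP p b x) (midP p r x)) (hp x))
          ((summable_mul_max_sub_zero hps hp (midP_nonneg hp r) hs).add hsum_corr)
    _ = ∑' x, p x * max (s - midP p r x) 0 := by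
        rw [(summable_mul_max_sub_zero hps hp (midP_nonneg hp r) hs).tsum_add hsum_corr,
          tsum_mul_mul_midP_sub_midP_eq_zero hps hp hr hg, add_zero]

end

theorem stmt_17_general {𝒳 : Type*} [Countable 𝒳] {Θ : Type*}
    (p : Θ → 𝒳 → ℝ) (hp : ∀ θ x, 0 ≤ p θ x) (hpsum : ∀ θ, ∑' x, p θ x = 1)
    (θ₀ : Θ) (p₀ : 𝒳 → ℝ) (hnull : p θ₀ = p₀)
    (T : 𝒳 → ℝ) (R : 𝒳 → ℕ)
    (hagree : ∀ x y, T x > T y → R x < R y)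
    (QT QMD : 𝒳 → ℝ)
    (hQT : ∀ x, QT x = (∑' y, if T x < T y then p₀ y else 0)
      + (1/2) * ∑' y, if T y = T x then p₀ y else 0)
    (hQMD : ∀ x, QMD x = (∑' y, if R y < R x then p₀ y else 0)
      + (1/2) * ∑' y, if R y = R x then p₀ y else 0) :
    ∀ s ∈ Set.Icc (0:ℝ) 1,
      (∫ a in (0:ℝ)..s, ∑' x, if QMD x ≤ a then p₀ x else 0)
        ≥ ∫ a in (0:ℝ)..s, ∑' x, if QT x ≤ a then p₀ x else 0 := by
  intro s hs
  have hp₀ : ∀ x, 0 ≤ p₀ x := hnull ▸ hp θ₀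
  have hps : Summable p₀ := by
    by_contra h
    simpa [hnull, tsum_eq_zero_of_not_summable h] using hpsum θ₀
  have hQT_eq : QT = midP p₀ (toDual ∘ T) := funext fun x => by
    simp [hQT, midP_eq hps, toDual_lt_toDual]
  have hQMD_eq : QMD = midP p₀ R := funext fun x => by
    rw [hQMD, midP_eq hps]
  rw [hQT_eq, hQMD_eq, ge_iff_le]
  exact intervalIntegral_tsum_ite_midP_le_of_refines hps hp₀
    (fun x y h => hagree x y (toDual_lt_toDual.mp h)) hs.1

/-- If `R` is injective and agrees with `T`, `p₀ > 0` everywhere,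
and `T` is sufficient for the family, then for every `s ∈ [0,1]`,
`∫₀ˢ Pr₀{Q^{MD}(X) ≤ α} dα ≥ ∫₀ˢ Pr₀{Q^T(X) ≤ α} dα`: the integrated null CDF
of the MD mid-p-value dominates that of the mid-p-value based on `T`. -/
theorem stmt_17 {𝒳 : Type*} [Countable 𝒳] {Θ : Type*}
    (p : Θ → 𝒳 → ℝ) (hp : ∀ θ x, 0 ≤ p θ x) (hpsum : ∀ θ, ∑' x, p θ x = 1)
    (θ₀ : Θ) (p₀ : 𝒳 → ℝ) (hnull : p θ₀ = p₀)
    (hp₀pos : ∀ x, 0 < p₀ x)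
    (T : 𝒳 → ℝ) (R : 𝒳 → ℕ) (hRinj : Function.Injective R)
    (hagree : ∀ x y, T x > T y → R x < R y)
    (hsuff : ∀ (θ : Θ) (x : 𝒳),
      p θ x * (∑' y, if T y = T x then p₀ y else 0)
        = p₀ x * ∑' y, if T y = T x then p θ y else 0)
    (QT QMD : 𝒳 → ℝ)
    (hQT : ∀ x, QT x = (∑' y, if T x < T y then p₀ y else 0)
      + (1/2) * ∑' y, if T y = T x then p₀ y else 0)
    (hQMD : ∀ x, QMD x = (∑' y, if R y < R x then p₀ y else 0)
      + (1/2) * ∑' y, if R y = R x then p₀ y else 0) :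
    ∀ s ∈ Set.Icc (0:ℝ) 1,
      (∫ a in (0:ℝ)..s, ∑' x, if QMD x ≤ a then p₀ x else 0)
        ≥ ∫ a in (0:ℝ)..s, ∑' x, if QT x ≤ a then p₀ x else 0 :=
  stmt_17_general p hp hpsum θ₀ p₀ hnull T R hagree QT QMD hQT hQMD
end
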